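/- arXiv:math/0701049 — 6 statements merged into one kernel-verified Lean document; each statement's English description precedes it below -/
import Mathlib

section
/- Let γ be a Gamma(1/2, 1)-distributed random variable (density x^{-1/2} e^{-x} / Γ(1/2) on (0,∞)). Then for every λ ≥ 0, E[exp(−λ/(4γ))] = exp(−√λ). Equivalently, ∫₀^∞ x^{-1/2} e^{-x} e^{-λ/(4x)} dx / Γ(1/2) = e^{-√λ}. In particular, the random variable T = 1/(4γ) is a standard positive 1/2-stable random variable. -/
open MeasureTheory

open Real Set

-- Key: ∫_{0}^{∞} exp(-(x - a/x)^2) dx = √π / 2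
lemma key (a : ℝ) (ha : 0 < a) :
    ∫ x in Ioi (0:ℝ), Real.exp (-(x - a/x)^2) = Real.sqrt π / 2 := by
  set F : ℝ → ℝ := fun x => Real.exp (-(x - a/x)^2) with hF
  have hmeasF : Measurable F := by
    apply Measurable.exp
    exact ((measurable_id.sub (measurable_const.div measurable_id)).pow measurable_const).neg
  -- rewrite F as product
  have hFeq : ∀ x ∈ Ioi (0:ℝ), F x = Real.exp (2*a) * Real.exp (-x^2) * Real.exp (-(a/x)^2) := by
    intro x hx
    have hx0 : x ≠ 0 := ne_of_gt hx
    rw [hF]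
    simp only
    rw [← Real.exp_add, ← Real.exp_add]
    congr 1
    field_simp
    ring
  -- integrability of F
  have hgauss : IntegrableOn (fun x => Real.exp (-x^2)) (Ioi (0:ℝ)) := by
    have := integrable_exp_neg_mul_sq (one_pos : (0:ℝ) < 1)
    simpa using this.integrableOn
  have hintF : IntegrableOn F (Ioi (0:ℝ)) := by
    apply Integrable.mono' (hgauss.const_mul (Real.exp (2*a)))
      (hmeasF.aestronglyMeasurable.restrict)
    filter_upwards [ae_restrict_mem measurableSet_Ioi] with x hx
    rw [hFeq x hx, Real.norm_eq_abs, abs_of_pos (mul_pos (mul_pos (Real.exp_pos _) (Real.exp_pos _)) (Real.exp_pos _))]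
    have h1 : Real.exp (-(a/x)^2) ≤ 1 := Real.exp_le_one_iff.mpr (neg_nonpos.mpr (sq_nonneg _))
    calc Real.exp (2*a) * Real.exp (-x^2) * Real.exp (-(a/x)^2)
        ≤ Real.exp (2*a) * Real.exp (-x^2) * 1 := by
          apply mul_le_mul_of_nonneg_left h1 (by positivity)
      _ = Real.exp (2*a) * Real.exp (-x^2) := by ring
  -- integrability of (a/x^2) * F
  have hintG : IntegrableOn (fun x => a / x^2 * F x) (Ioi (0:ℝ)) := by
    apply Integrable.mono' (hgauss.const_mul (Real.exp (2*a) / a))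
      (((measurable_const.div (measurable_id.pow measurable_const)).mul hmeasF).aestronglyMeasurable.restrict)
    filter_upwards [ae_restrict_mem measurableSet_Ioi] with x hx
    have hx0 : (0:ℝ) < x := hx
    have hax : 0 < a / x^2 := by positivity
    simp only [id_eq, Real.norm_eq_abs, Pi.mul_apply, Pi.div_apply]
    rw [hFeq x hx, abs_of_pos (mul_pos hax (mul_pos (mul_pos (Real.exp_pos _) (Real.exp_pos _)) (Real.exp_pos _)))]
    have hkey : a / x^2 * Real.exp (-(a/x)^2) ≤ 1 / a := by
      have h1 : (a/x)^2 ≤ Real.exp ((a/x)^2) := by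
        have := Real.add_one_le_exp ((a/x)^2); linarith
      have h3 : (0:ℝ) < (a/x)^2 := by positivity
      have h4 : (Real.exp (-(a/x)^2)) ≤ ((a/x)^2)⁻¹ := by
        rw [Real.exp_neg]
        exact inv_anti₀ h3 h1
      calc a / x^2 * Real.exp (-(a/x)^2) ≤ a / x^2 * ((a/x)^2)⁻¹ :=
            mul_le_mul_of_nonneg_left h4 hax.le
        _ = 1 / a := by field_simp
    calc a / x^2 * (Real.exp (2*a) * Real.exp (-x^2) * Real.exp (-(a/x)^2))
        = (a / x^2 * Real.exp (-(a/x)^2)) * Real.exp (2*a) * Real.exp (-x^2) := by ring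
      _ ≤ (1/a) * Real.exp (2*a) * Real.exp (-x^2) := by
          apply mul_le_mul_of_nonneg_right _ (Real.exp_pos _).le
          exact mul_le_mul_of_nonneg_right hkey (Real.exp_pos _).le
      _ = Real.exp (2*a) / a * Real.exp (-x^2) := by ring
  -- substitution x ↦ a/x gives ∫ (a/x²) F = ∫ F
  have hsub : ∫ x in Ioi (0:ℝ), a / x^2 * F x = ∫ x in Ioi (0:ℝ), F x := by
    have h1 := integral_comp_rpow_Ioi (fun y => F (a * y)) (p := -1) (by norm_num)
    have h2 : (∫ x in Ioi (0:ℝ), F (a * x)) = a⁻¹ • ∫ x in Ioi (0:ℝ), F x := by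
      have := integral_comp_mul_left_Ioi F 0 ha
      rwa [mul_zero] at this
    rw [h2] at h1
    have h3 : ∀ x ∈ Ioi (0:ℝ),
        (|(-1:ℝ)| * x ^ ((-1:ℝ) - 1)) • F (a * x ^ (-1:ℝ)) = x⁻¹ * x⁻¹ * F x := by
      intro x hx
      have hx0 : (0:ℝ) < x := hx
      have hFsym : F (a / x) = F x := by
        simp only [hF]
        congr 1
        have hax : a / (a / x) = x := by
          field_simp
        rw [hax]; ring
      have e1 : x ^ ((-1:ℝ)-1) = x⁻¹ * x⁻¹ := by
        rw [show ((-1:ℝ)-1) = (-1) + (-1) by ring, Real.rpow_add hx0, Real.rpow_neg_one]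
      have e2 : a * x ^ (-1:ℝ) = a / x := by rw [Real.rpow_neg_one]; ring
      rw [e1, e2, hFsym, smul_eq_mul, abs_neg, abs_one, one_mul]
    rw [setIntegral_congr_fun measurableSet_Ioi h3] at h1
    have h4 : ∀ x ∈ Ioi (0:ℝ), a / x^2 * F x = a * (x⁻¹ * x⁻¹ * F x) := by
      intro x hx; have hx0 : (0:ℝ) < x := hx
      field_simp [sq]
    rw [setIntegral_congr_fun measurableSet_Ioi h4, integral_const_mul, h1, smul_eq_mul]
    field_simp
  -- change of variables v = x - a/x
  have hC : ∫ x in Ioi (0:ℝ), (1 + a / x^2) * F x = Real.sqrt π := by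
    have hderiv : ∀ x ∈ Ioi (0:ℝ), HasDerivWithinAt (fun x => x - a / x)
        (1 + a / x^2) (Ioi (0:ℝ)) x := by
      intro x hx
      have hx0 : (x:ℝ) ≠ 0 := ne_of_gt hx
      have h := (hasDerivAt_id x).sub (((hasDerivAt_inv hx0).const_mul a))
      have e : (fun x => x - a / x) = (id - fun y => a * y⁻¹) := by ext y; simp [div_eq_mul_inv]
      rw [e]; exact (h.congr_deriv (by ring)).hasDerivWithinAt
    have hinj : InjOn (fun x => x - a / x) (Ioi (0:ℝ)) := by
      apply StrictMonoOn.injOn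
      intro x hx y hy hxy
      have hx0 : (0:ℝ) < x := hx
      have hy0 : (0:ℝ) < y := hy
      have : a / y < a / x := div_lt_div_of_pos_left ha hx0 hxy
      simp only
      linarith
    have himg : (fun x => x - a / x) '' (Ioi (0:ℝ)) = univ := by
      apply eq_univ_of_forall
      intro v
      set s := Real.sqrt (v^2 + 4*a) with hs
      have hs2 : s^2 = v^2 + 4*a := Real.sq_sqrt (by positivity)
      have hsv : |v| < s := by
        nlinarith [abs_nonneg v, sq_abs v, Real.sqrt_nonneg (v^2+4*a)]
      have hx0 : 0 < (v + s) / 2 := by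
        cases' abs_lt.mp hsv with h1 h2; linarith
      refine ⟨(v + s)/2, hx0, ?_⟩
      simp only
      have hne : (v + s)/2 ≠ 0 := ne_of_gt hx0
      have hvs : (0:ℝ) < v + s := by linarith
      have key : ((v + s)/2 - a/((v + s)/2)) * ((v + s)/2) = v * ((v + s)/2) := by
        field_simp [hvs.ne']
        nlinarith [hs2]
      exact mul_right_cancel₀ hne key
    have := integral_image_eq_integral_abs_deriv_smul measurableSet_Ioi hderiv hinj
      (fun v => Real.exp (-v^2))
    rw [himg] at this
    have hgint : ∫ x in (univ : Set ℝ), Real.exp (-x^2) = Real.sqrt π := by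
      rw [setIntegral_univ]
      have := integral_gaussian 1
      simpa using this
    rw [← hgint, this]
    apply setIntegral_congr_fun measurableSet_Ioi
    intro x hx
    have hx0 : (0:ℝ) < x := hx
    have hpos : (0:ℝ) < 1 + a / x^2 := by positivity
    simp only [smul_eq_mul, abs_of_pos hpos, hF]
  -- combine
  have hsplit : ∫ x in Ioi (0:ℝ), (1 + a / x^2) * F x
      = (∫ x in Ioi (0:ℝ), F x) + ∫ x in Ioi (0:ℝ), a / x^2 * F x := by
    rw [← integral_add hintF hintG]
    apply setIntegral_congr_fun measurableSet_Ioi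
    intro x hx
    ring
  rw [hsplit, hsub] at hC
  linarith

theorem stmt_1 (l : ℝ) (hl : 0 ≤ l) :
    (∫ x in Set.Ioi (0:ℝ),
        x ^ (-(1/2 : ℝ)) * Real.exp (-x) * Real.exp (-l / (4 * x))) /
      Real.Gamma (1/2) = Real.exp (-Real.sqrt l) := by
  rcases eq_or_lt_of_le hl with rfl | hl'
  · -- l = 0
    have h0 : ∀ x ∈ Ioi (0:ℝ), x ^ (-(1/2:ℝ)) * Real.exp (-x) * Real.exp (-(0:ℝ) / (4*x))
        = Real.exp (-x) * x ^ ((1/2:ℝ) - 1) := by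
      intro x hx
      rw [neg_zero, zero_div, Real.exp_zero, mul_one,
        show (1/2:ℝ) - 1 = -(1/2) by norm_num, mul_comm]
    rw [setIntegral_congr_fun measurableSet_Ioi h0,
      ← Real.Gamma_eq_integral (by norm_num : (0:ℝ) < 1/2),
      div_self (Real.Gamma_pos_of_pos (by norm_num : (0:ℝ) < 1/2)).ne',
      Real.sqrt_zero, neg_zero, Real.exp_zero]
  · set a : ℝ := Real.sqrt l / 2 with ha_def
    have ha : 0 < a := by positivity
    have hsql : Real.sqrt l ^ 2 = l := Real.sq_sqrt hl
    have hl4 : l = 4 * a^2 := by rw [ha_def]; field_simp; nlinarith [hsql]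
    have h1 := integral_comp_rpow_Ioi
      (fun x => x ^ (-(1/2:ℝ)) * Real.exp (-x) * Real.exp (-l / (4*x))) (p := 2) (by norm_num)
    have h2 : ∀ x ∈ Ioi (0:ℝ),
        (|(2:ℝ)| * x ^ ((2:ℝ)-1)) • ((x^(2:ℝ)) ^ (-(1/2:ℝ)) * Real.exp (-(x^(2:ℝ)))
          * Real.exp (-l / (4*(x^(2:ℝ)))))
        = (2 * Real.exp (-2*a)) * Real.exp (-(x - a/x)^2) := by
      intro x hx
      have hx0 : (0:ℝ) < x := hx
      have e1 : (x^(2:ℝ)) ^ (-(1/2:ℝ)) = x⁻¹ := by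
        rw [← Real.rpow_mul hx0.le]
        norm_num [Real.rpow_neg_one]
      have e2 : x ^ ((2:ℝ)-1) = x := by
        norm_num [Real.rpow_one]
      have e3 : x ^ (2:ℝ) = x^2 := by
        rw [show (2:ℝ) = ((2:ℕ):ℝ) by norm_num, Real.rpow_natCast]
      have hexp : Real.exp (-(x^2)) * Real.exp (-l / (4*x^2))
          = Real.exp (-2*a) * Real.exp (-(x - a/x)^2) := by
        rw [← Real.exp_add, ← Real.exp_add]
        congr 1
        rw [hl4]
        field_simp
        ring
      rw [e1, e2, e3, smul_eq_mul]
      calc |(2:ℝ)| * x * (x⁻¹ * Real.exp (-(x^2)) * Real.exp (-l / (4*x^2)))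
          = (x * x⁻¹) * (2 * (Real.exp (-(x^2)) * Real.exp (-l / (4*x^2)))) := by
            rw [abs_of_pos (by norm_num : (0:ℝ) < 2)]; ring
        _ = 2 * (Real.exp (-(x^2)) * Real.exp (-l / (4*x^2))) := by
            rw [mul_inv_cancel₀ hx0.ne', one_mul]
        _ = 2 * Real.exp (-2*a) * Real.exp (-(x - a/x)^2) := by rw [hexp]; ring
    rw [setIntegral_congr_fun measurableSet_Ioi h2] at h1
    rw [← h1, integral_const_mul, key a ha, Real.Gamma_one_half_eq]
    have hpi : (0:ℝ) < Real.sqrt π := Real.sqrt_pos.mpr Real.pi_pos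
    have hs : -Real.sqrt l = -2*a := by rw [ha_def]; ring
    rw [hs]
    field_simp
end

section
/- Let γ ~ Gamma(t/2, 1) and β ~ Beta(1/2, (1+t)/2) be independent random variables, with t > 0. Then for all λ ≥ 0, E[exp(−λ γ/β)] = (√(1+λ) − √λ)^t. -/
open MeasureTheory

open Set in

lemma rpow_bdd_aux {z q C : ℝ} (h2 : C ≤ z) (h3 : 0 < C) (hz1 : z ≤ 1) :
    ‖z ^ q‖ ≤ C ^ q + 1 := by
  rw [Real.norm_eq_abs, abs_of_nonneg (Real.rpow_nonneg (h3.trans_le h2).le q)]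
  rcases le_or_gt 0 q with h | h
  · have h5 : z ^ q ≤ 1 ^ q := Real.rpow_le_rpow (h3.trans_le h2).le hz1 h
    have h4 : (0:ℝ) < C ^ q := Real.rpow_pos_of_pos h3 q
    simp only [Real.one_rpow] at h5; linarith
  · have h5 : z ^ q ≤ C ^ q := Real.rpow_le_rpow_of_nonpos h3 h2 h.le
    linarith

lemma halfInt {p : ℝ} (q : ℝ) (hp : -1 < p) :
    IntegrableOn (fun y : ℝ => y ^ p * (1 - y) ^ q) (Set.Ioc 0 2⁻¹) := by
  have h1 : IntegrableOn (fun y : ℝ => y ^ p) (Set.Ioc 0 2⁻¹) := by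
    have := intervalIntegral.intervalIntegrable_rpow' (a := 0) (b := 2⁻¹) hp
    rwa [intervalIntegrable_iff_integrableOn_Ioc_of_le (by norm_num)] at this
  have hC : ∀ᵐ y ∂(volume.restrict (Set.Ioc (0:ℝ) 2⁻¹)),
      ‖(1 - y) ^ q‖ ≤ (2⁻¹ : ℝ) ^ q + 1 := by
    filter_upwards [ae_restrict_mem measurableSet_Ioc] with y hy
    exact rpow_bdd_aux (by linarith [hy.2]) (by norm_num) (by linarith [hy.1])
  have hm : Measurable fun y : ℝ => (1 - y) ^ q := by fun_prop
  have := MeasureTheory.Integrable.bdd_mul (f := fun y : ℝ => (1-y)^q)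
    (g := fun y : ℝ => y ^ p) (c := (2⁻¹:ℝ)^q + 1) h1 hm.aestronglyMeasurable hC
  exact this.congr (Filter.Eventually.of_forall (fun y => by ring))

lemma betaInt {p q : ℝ} (hp : -1 < p) (hq : -1 < q) :
    IntegrableOn (fun y : ℝ => y ^ p * (1 - y) ^ q) (Set.Ioo 0 1) := by
  have h2 : IntegrableOn (fun y : ℝ => y ^ p * (1 - y) ^ q) (Set.Ico 2⁻¹ 1) := by
    have himg : (fun x : ℝ => 1 - x) '' (Set.Ioc 0 2⁻¹) = Set.Ico 2⁻¹ 1 := by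
      ext z
      simp only [Set.mem_image, Set.mem_Ioc, Set.mem_Ico]
      constructor
      · rintro ⟨x, ⟨hx1, hx2⟩, rfl⟩; constructor <;> linarith
      · rintro ⟨h1, h2⟩; exact ⟨1 - z, ⟨by linarith, by linarith⟩, by ring⟩
    have hd : ∀ x ∈ Set.Ioc (0:ℝ) 2⁻¹, HasDerivWithinAt (fun x : ℝ => 1 - x) (-1) (Set.Ioc (0:ℝ) 2⁻¹) x :=
      fun x _ => ((hasDerivAt_id x).const_sub 1).hasDerivWithinAt
    have hinj : Set.InjOn (fun x : ℝ => 1 - x) (Set.Ioc 0 2⁻¹) := fun a _ b _ h => by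
      simpa using h
    rw [← himg, MeasureTheory.integrableOn_image_iff_integrableOn_abs_deriv_smul
      measurableSet_Ioc hd hinj]
    have := halfInt (p := q) p hq
    refine this.congr (Filter.Eventually.of_forall (fun y => ?_))
    simp only [smul_eq_mul]
    rw [abs_neg, abs_one]
    ring_nf
  have h1 := halfInt q hp
  have := h1.union h2
  refine this.mono_set ?_
  rw [Set.Ioc_union_Ico_eq_Ioo (by norm_num : (0:ℝ) < 2⁻¹) (by norm_num : (2⁻¹:ℝ) < 1)]

lemma K1 {q : ℝ} (hq : -1 < q) :
    IntegrableOn (fun v : ℝ => (1 - v^2) ^ q) (Set.Ioo (-1) 1) := by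
  have himg : (fun y : ℝ => 1 - 2*y) '' (Set.Ioo 0 1) = Set.Ioo (-1) 1 := by
    ext z
    simp only [Set.mem_image, Set.mem_Ioo]
    constructor
    · rintro ⟨x, ⟨hx1, hx2⟩, rfl⟩; constructor <;> linarith
    · rintro ⟨h1, h2⟩; exact ⟨(1 - z)/2, ⟨by linarith, by linarith⟩, by ring⟩
  have hd : ∀ x ∈ Set.Ioo (0:ℝ) 1, HasDerivWithinAt (fun y : ℝ => 1 - 2*y) (-2) (Set.Ioo (0:ℝ) 1) x :=
    fun x _ => by simpa using ((((hasDerivAt_id x).const_mul 2).const_sub 1).hasDerivWithinAt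
      (s := Set.Ioo (0:ℝ) 1))
  have hinj : Set.InjOn (fun y : ℝ => 1 - 2*y) (Set.Ioo 0 1) := fun a _ b _ h => by
    simp only at h; linarith
  rw [← himg, MeasureTheory.integrableOn_image_iff_integrableOn_abs_deriv_smul
    measurableSet_Ioo hd hinj]
  have hb : IntegrableOn (fun y : ℝ => (2 * 4 ^ q) * (y ^ q * (1 - y) ^ q)) (Set.Ioo 0 1) :=
    (betaInt hq hq).const_mul _
  refine hb.congr ?_
  filter_upwards [ae_restrict_mem measurableSet_Ioo] with y hy
  have h1 : (0:ℝ) ≤ y := hy.1.le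
  have h2 : (0:ℝ) ≤ 1 - y := by linarith [hy.2]
  have key : 1 - (1 - 2*y)^2 = 4 * (y * (1-y)) := by ring
  rw [smul_eq_mul, key, Real.mul_rpow (by norm_num) (by positivity),
    Real.mul_rpow h1 h2]
  rw [abs_neg, abs_of_nonneg (by norm_num : (0:ℝ) ≤ 2)]
  ring

lemma K2 {q : ℝ} (hq : -1 < q) :
    ∫ v in Set.Ioo (-1:ℝ) 1, (1 - v^2) ^ q
      = ∫ y in Set.Ioo (0:ℝ) 1, y ^ ((1:ℝ)/2 - 1) * (1 - y) ^ q := by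
  -- B = 2 * ∫_{Ioo 0 1} h
  have hsq : ∫ y in Set.Ioo (0:ℝ) 1, y ^ ((1:ℝ)/2 - 1) * (1 - y) ^ q
      = ∫ v in Set.Ioo (0:ℝ) 1, 2 * (1 - v^2) ^ q := by
    have himg : (fun v : ℝ => v^2) '' (Set.Ioo 0 1) = Set.Ioo 0 1 := by
      ext z
      simp only [Set.mem_image, Set.mem_Ioo]
      constructor
      · rintro ⟨x, ⟨hx1, hx2⟩, rfl⟩; constructor <;> nlinarith
      · rintro ⟨h1, h2⟩
        exact ⟨Real.sqrt z, ⟨Real.sqrt_pos.2 h1, by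
          rw [show (1:ℝ) = Real.sqrt 1 by simp]
          exact Real.sqrt_lt_sqrt h1.le (by linarith)⟩, Real.sq_sqrt h1.le⟩
    have hd : ∀ x ∈ Set.Ioo (0:ℝ) 1, HasDerivWithinAt (fun v : ℝ => v^2) (2*x) (Set.Ioo (0:ℝ) 1) x := by
      intro x _
      simpa using (hasDerivAt_pow 2 x).hasDerivWithinAt
    have hmono : StrictMonoOn (fun v : ℝ => v^2) (Set.Ioo 0 1) := fun a ha b hb hab => by
      simp only; nlinarith [ha.1]
    conv_lhs => rw [← himg]
    rw [MeasureTheory.integral_image_eq_integral_abs_deriv_smul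
      measurableSet_Ioo hd hmono.injOn]
    refine MeasureTheory.setIntegral_congr_fun measurableSet_Ioo (fun v hv => ?_)
    have hv1 : (0:ℝ) < v := hv.1
    have : ((v:ℝ)^2) ^ ((1:ℝ)/2 - 1) = v ^ (2 * ((1:ℝ)/2 - 1)) := by
      rw [← Real.rpow_natCast v 2, ← Real.rpow_mul hv1.le]; norm_num
    simp only [smul_eq_mul]
    rw [this, abs_of_nonneg (by positivity : (0:ℝ) ≤ 2*v)]
    have : v ^ (2 * ((1:ℝ)/2 - 1)) = v⁻¹ := by
      norm_num
      exact Real.rpow_neg_one v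
    rw [this]
    field_simp
  -- split Ioo (-1) 1
  have hsplit : ∫ v in Set.Ioo (-1:ℝ) 1, (1 - v^2) ^ q
      = (∫ v in Set.Ioo (-1:ℝ) 0, (1 - v^2) ^ q) + ∫ v in Set.Ioo (0:ℝ) 1, (1 - v^2) ^ q := by
    rw [← Set.Ioo_union_Ico_eq_Ioo (by norm_num : (-1:ℝ) < 0) (by norm_num : (0:ℝ) ≤ 1)]
    rw [MeasureTheory.setIntegral_union (by
        rw [Set.disjoint_iff_inter_eq_empty]
        ext z; simp only [Set.mem_inter_iff, Set.mem_Ioo, Set.mem_Ico, Set.mem_empty_iff_false]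
        constructor
        · rintro ⟨⟨_, h2⟩, ⟨h3, _⟩⟩; linarith
        · exact fun h => h.elim) measurableSet_Ico
      ((K1 hq).mono_set (by intro z hz; exact ⟨by linarith [hz.1], by linarith [hz.2]⟩))
      ((K1 hq).mono_set (by intro z hz; constructor <;> [linarith [hz.1]; exact hz.2]))]
    rw [MeasureTheory.integral_Ico_eq_integral_Ioo]
  have hneg : ∫ v in Set.Ioo (-1:ℝ) 0, (1 - v^2) ^ q = ∫ v in Set.Ioo (0:ℝ) 1, (1 - v^2) ^ q := by
    have himg : (fun v : ℝ => -v) '' (Set.Ioo 0 1) = Set.Ioo (-1) 0 := by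
      ext z
      simp only [Set.mem_image, Set.mem_Ioo]
      constructor
      · rintro ⟨x, ⟨hx1, hx2⟩, rfl⟩; constructor <;> linarith
      · rintro ⟨h1, h2⟩; exact ⟨-z, ⟨by linarith, by linarith⟩, by ring⟩
    have hd : ∀ x ∈ Set.Ioo (0:ℝ) 1, HasDerivWithinAt (fun v : ℝ => -v) (-1) (Set.Ioo (0:ℝ) 1) x :=
      fun x _ => (hasDerivAt_id x).neg.hasDerivWithinAt
    have hinj : Set.InjOn (fun v : ℝ => -v) (Set.Ioo 0 1) := fun a _ b _ h => by
      simpa using h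
    rw [← himg, MeasureTheory.integral_image_eq_integral_abs_deriv_smul
      measurableSet_Ioo hd hinj]
    refine MeasureTheory.setIntegral_congr_fun measurableSet_Ioo (fun v hv => ?_)
    simp only [smul_eq_mul, abs_neg, abs_one, neg_sq, one_mul]
  rw [hsplit, hneg, hsq, MeasureTheory.integral_const_mul 2, two_mul]

lemma sum_sqrt_aux {a b : ℝ} (ha : 0 ≤ a) (h : a^2 = b) :
    a = Real.sqrt b := by
  rw [← h, Real.sqrt_sq ha]

set_option maxHeartbeats 1000000 in
lemma stepI (t l : ℝ) (ht : 0 < t) (hl : 0 < l) :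
    ∫ y in Set.Ioo (0:ℝ) 1, y ^ ((1+t)/2 - 1) * (1-y) ^ ((1+t)/2 - 1) * (y+l) ^ (-(t/2))
      = (Real.sqrt (1 + l) - Real.sqrt l) ^ t
        * ∫ y in Set.Ioo (0:ℝ) 1, y ^ ((1:ℝ)/2 - 1) * (1-y) ^ ((1+t)/2 - 1) := by
  have hq : (-1:ℝ) < (1+t)/2 - 1 := by linarith
  set q : ℝ := (1+t)/2 - 1 with hqdef
  have hl1 : (0:ℝ) < 1 + l := by linarith
  set c : ℝ := Real.sqrt (l*(1+l)) with hcdef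
  have hc0 : 0 < c := Real.sqrt_pos.2 (by positivity)
  have hc2 : c^2 = l*(1+l) := Real.sq_sqrt (by positivity)
  set x : ℝ := Real.sqrt (1+l) - Real.sqrt l with hxdef
  have hx0 : 0 < x := sub_pos.2 (Real.sqrt_lt_sqrt hl.le (by linarith))
  set d : ℝ := 1 + 2*l - 2*c with hddef
  have hxc : Real.sqrt (1+l) * Real.sqrt l = c := by
    rw [hcdef, Real.sqrt_mul hl.le, mul_comm]
  have hxd : x^2 = d := by
    have h1 : x^2 = Real.sqrt (1+l)^2 - 2*(Real.sqrt (1+l)*Real.sqrt l) + Real.sqrt l ^2 := by ring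
    rw [h1, Real.sq_sqrt hl1.le, Real.sq_sqrt hl.le, hxc, hddef]; ring
  have hd0 : 0 < d := hxd ▸ pow_pos hx0 2
  have hcd : c < 1 + l := by nlinarith
  set u₁ : ℝ := Real.log ((1+l)/c) / 2 with hu₁def
  have hE1 : Real.exp (2*u₁) = (1+l)/c := by
    rw [hu₁def, show 2*(Real.log ((1+l)/c)/2) = Real.log ((1+l)/c) by ring,
      Real.exp_log (by positivity)]
  have hE0 : Real.exp (2*(-u₁)) = l/c := by
    rw [mul_neg, Real.exp_neg, hE1, inv_div, div_eq_div_iff hl1.ne' hc0.ne']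
    nlinarith
  have hu₁neg : -u₁ = Real.log (l/c) / 2 := by
    have h1 : Real.log (l/c) = 2*(-u₁) := by rw [← hE0, Real.log_exp]
    linarith
  have hu₁pos : 0 < u₁ := by
    have h := Real.log_pos ((one_lt_div hc0).2 hcd)
    rw [hu₁def]; linarith
  set g : ℝ → ℝ := fun u => c * Real.exp (2*u) - l with hgdef
  set s : Set ℝ := Set.Ioo (-u₁) u₁ with hsdef
  have hmem : ∀ u ∈ s, 0 < g u ∧ g u < 1 := by
    intro u hu
    have h1 : Real.exp (2*u) < (1+l)/c := by
      rw [← hE1]; exact Real.exp_lt_exp.2 (by linarith [hu.2])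
    have h2 : l/c < Real.exp (2*u) := by
      rw [← hE0]; exact Real.exp_lt_exp.2 (by linarith [hu.1])
    constructor
    · have := (div_lt_iff₀ hc0).1 h2; simp only [hgdef]; linarith
    · have := (lt_div_iff₀ hc0).1 h1; simp only [hgdef]; linarith
  have himg : g '' s = Set.Ioo 0 1 := by
    ext z
    simp only [Set.mem_image]
    constructor
    · rintro ⟨u, hu, rfl⟩; exact ⟨(hmem u hu).1, (hmem u hu).2⟩
    · rintro ⟨hz0, hz1⟩
      refine ⟨Real.log ((z+l)/c) / 2, ⟨?_, ?_⟩, ?_⟩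
      · have h2 : l/c < (z+l)/c := div_lt_div_of_pos_right (by linarith) hc0
        have hlog := Real.log_lt_log (by positivity : (0:ℝ) < l/c) h2
        rw [hu₁neg]; linarith
      · have h2 : (z+l)/c < (1+l)/c := div_lt_div_of_pos_right (by linarith) hc0
        have hlog := Real.log_lt_log (by positivity : (0:ℝ) < (z+l)/c) h2
        rw [hu₁def]; linarith
      · simp only [hgdef]
        rw [show 2*(Real.log ((z+l)/c)/2) = Real.log ((z+l)/c) by ring,
          Real.exp_log (by positivity)]
        field_simp
        ring
  have hgd : ∀ u ∈ s, HasDerivWithinAt g (2*c*Real.exp (2*u)) s u := by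
    intro u _
    have h1 : HasDerivAt (fun v : ℝ => 2*v) 2 u := by
      simpa using (hasDerivAt_id u).const_mul 2
    have h2 := (h1.exp.const_mul c).sub_const l
    have h3 : (2:ℝ)*c*Real.exp (2*u) = c * (Real.exp (2*u) * 2) := by ring
    rw [h3]
    exact h2.hasDerivWithinAt
  have hginj : Set.InjOn g s := by
    intro a _ b _ hab
    simp only [hgdef] at hab
    have h1 : c * Real.exp (2*a) = c * Real.exp (2*b) := by linarith
    have h2 := mul_left_cancel₀ hc0.ne' h1
    have := Real.exp_injective h2
    linarith
  set k : ℝ := Real.sqrt c / Real.sqrt d with hkdef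
  have hk0 : 0 < k := div_pos (Real.sqrt_pos.2 hc0) (Real.sqrt_pos.2 hd0)
  have hk2 : k^2 = c/d := by
    rw [hkdef, div_pow, Real.sq_sqrt hc0.le, Real.sq_sqrt hd0.le]
  set w : ℝ → ℝ := fun u => k * (Real.exp u - Real.exp (-u)) with hwdef
  have hdw : ∀ u : ℝ, d * (1 - (w u)^2) = d - c*(Real.exp u - Real.exp (-u))^2 := by
    intro u
    simp only [hwdef]
    rw [mul_pow, hk2]
    field_simp
  have key1 : ∀ u : ℝ, (c*Real.exp (2*u) - l) * (1 + l - c*Real.exp (2*u))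
      = c * Real.exp (2*u) * (d * (1 - (w u)^2)) := by
    intro u
    have hE2 : Real.exp (2*u) = Real.exp u * Real.exp u := by
      rw [two_mul, Real.exp_add]
    have hEF : Real.exp u * Real.exp (-u) = 1 := by
      rw [← Real.exp_add]; simp
    rw [hdw, hE2, hddef]
    linear_combination hc2 + c^2*(Real.exp u * Real.exp (-u) + 1 - 2*(Real.exp u)^2) * hEF
  have hwpos : ∀ u ∈ s, 0 < 1 - (w u)^2 := by
    intro u hu
    have h1 := (hmem u hu).1
    have h2 := (hmem u hu).2
    have h3 := key1 u
    have h4 : 0 < (c*Real.exp (2*u) - l) * (1 + l - c*Real.exp (2*u)) := by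
      simp only [hgdef] at h1 h2
      apply mul_pos (by linarith) (by linarith)
    have h5 : 0 < c * Real.exp (2*u) := by positivity
    by_contra hcon
    push_neg at hcon
    nlinarith [mul_nonneg (mul_pos h5 hd0).le (neg_nonneg.2 hcon)]
  set A : ℝ → ℝ := fun u => d^q * Real.sqrt c * (Real.exp u + Real.exp (-u)) * (1 - (w u)^2)^q
    with hAdef
  set Bo : ℝ → ℝ := fun u => d^q * Real.sqrt c * (Real.exp u - Real.exp (-u)) * (1 - (w u)^2)^q
    with hBodef
  have hpt : ∀ u ∈ s, |2*c*Real.exp (2*u)| * (g u ^ q * (1 - g u) ^ q * (g u + l) ^ (-(t/2)))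
      = A u + Bo u := by
    intro u hu
    have h1 := (hmem u hu).1
    have h2 := (hmem u hu).2
    have hE2pos : (0:ℝ) < c * Real.exp (2*u) := by positivity
    have hgl : g u + l = c * Real.exp (2*u) := by simp only [hgdef]; ring
    have h1mg : 1 - g u = 1 + l - c * Real.exp (2*u) := by simp only [hgdef]; ring
    have habs : |2*c*Real.exp (2*u)| = 2*c*Real.exp (2*u) := abs_of_pos (by positivity)
    have hw1 := hwpos u hu
    have hcomb : g u ^ q * (1 - g u) ^ q = (c*Real.exp (2*u))^q * d^q * (1 - (w u)^2)^q := by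
      rw [← Real.mul_rpow h1.le (by linarith), h1mg]
      have he : g u * (1 + l - c*Real.exp (2*u)) = c * Real.exp (2*u) * (d * (1 - (w u)^2)) := by
        simp only [hgdef]; rw [← key1 u]
      rw [he, Real.mul_rpow (by positivity) (by positivity),
        Real.mul_rpow hd0.le hw1.le]
      ring
    rw [habs, hcomb, hgl]
    have hhalf : (c*Real.exp (2*u)) ^ ((1:ℝ)/2) = Real.sqrt c * Real.exp u := by
      rw [Real.mul_rpow hc0.le (Real.exp_pos _).le, ← Real.sqrt_eq_rpow,
        ← Real.exp_mul, show (2*u)*((1:ℝ)/2) = u by ring]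
    have hexp : (1:ℝ) + (q + -(t/2)) = 1/2 := by rw [hqdef]; ring
    calc 2*c*Real.exp (2*u) * ((c*Real.exp (2*u))^q * d^q * (1 - (w u)^2)^q
          * (c*Real.exp (2*u)) ^ (-(t/2)))
        = 2 * ((c*Real.exp (2*u))^(1:ℝ) * ((c*Real.exp (2*u))^q * (c*Real.exp (2*u))^(-(t/2))))
          * (d^q * (1 - (w u)^2)^q) := by rw [Real.rpow_one]; ring
      _ = 2 * (c*Real.exp (2*u)) ^ ((1:ℝ) + (q + -(t/2))) * (d^q * (1 - (w u)^2)^q) := by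
          rw [← Real.rpow_add hE2pos, ← Real.rpow_add hE2pos]
      _ = 2 * (c*Real.exp (2*u)) ^ ((1:ℝ)/2) * (d^q * (1 - (w u)^2)^q) := by rw [hexp]
      _ = A u + Bo u := by rw [hhalf, hAdef, hBodef]; ring
  -- w : strict mono, value at u₁, image, derivative
  have hwmono : StrictMono w := by
    intro a b hab
    simp only [hwdef]
    have h1 : Real.exp a < Real.exp b := Real.exp_lt_exp.2 hab
    have h2 : Real.exp (-b) < Real.exp (-a) := Real.exp_lt_exp.2 (by linarith)
    exact mul_lt_mul_of_pos_left (sub_lt_sub h1 h2) hk0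
  have hwUval : w u₁ = 1 := by
    have hEu : Real.exp u₁ * Real.exp u₁ = (1+l)/c := by rw [← Real.exp_add, ← two_mul, hE1]
    have hFu : Real.exp (-u₁) * Real.exp (-u₁) = l/c := by
      rw [← Real.exp_add, show -u₁ + -u₁ = 2*(-u₁) by ring, hE0]
    have hEF : Real.exp u₁ * Real.exp (-u₁) = 1 := by rw [← Real.exp_add]; simp
    have hsq : c * (Real.exp u₁ - Real.exp (-u₁))^2 = d := by
      have h6 : (Real.exp u₁ - Real.exp (-u₁))^2 = (1+l)/c + l/c - 2 := by
        linear_combination hEu + hFu - 2*hEF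
      rw [h6, hddef]; field_simp; ring
    have hge : 0 ≤ Real.exp u₁ - Real.exp (-u₁) := by
      have := Real.exp_lt_exp.2 (by linarith : -u₁ < u₁)
      linarith
    have h5 : Real.sqrt c * (Real.exp u₁ - Real.exp (-u₁)) = Real.sqrt d := by
      apply sum_sqrt_aux (by positivity)
      rw [mul_pow, Real.sq_sqrt hc0.le, hsq]
    simp only [hwdef, hkdef]
    rw [div_mul_eq_mul_div, h5, div_self (Real.sqrt_pos.2 hd0).ne']
  have hwneg : ∀ u : ℝ, w (-u) = - w u := by
    intro u; simp only [hwdef, neg_neg]; ring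
  have hwLval : w (-u₁) = -1 := by rw [hwneg, hwUval]
  have hwimg : w '' s = Set.Ioo (-1) 1 := by
    apply Set.Subset.antisymm
    · rintro z ⟨u, hu, rfl⟩
      constructor
      · rw [← hwLval]; exact hwmono hu.1
      · rw [← hwUval]; exact hwmono hu.2
    · have h1 : Set.Ioo (w (-u₁)) (w u₁) ⊆ w '' (Set.Ioo (-u₁) u₁) :=
        intermediate_value_Ioo (by linarith) (by fun_prop : Continuous w).continuousOn
      rw [hwLval, hwUval] at h1
      exact h1
  have hwd : ∀ u ∈ s, HasDerivWithinAt w (k*(Real.exp u + Real.exp (-u))) s u := by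
    intro u _
    have h0 : HasDerivAt (fun v : ℝ => Real.exp v - Real.exp (-v))
        (Real.exp u - Real.exp (-u) * (-1)) u :=
      (Real.hasDerivAt_exp u).sub (((hasDerivAt_id u).neg).exp)
    have h1 := h0.const_mul k
    have h3 : k*(Real.exp u + Real.exp (-u)) = k * (Real.exp u - Real.exp (-u) * (-1)) := by ring
    rw [h3]
    exact h1.hasDerivWithinAt
  have hwinj : Set.InjOn w s := hwmono.injective.injOn
  -- integral of A
  have hiw := MeasureTheory.integral_image_eq_integral_abs_deriv_smul measurableSet_Ioo hwd hwinj
      (fun v : ℝ => (1 - v^2)^q)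
  rw [hwimg] at hiw
  have hIww := (MeasureTheory.integrableOn_image_iff_integrableOn_abs_deriv_smul
      measurableSet_Ioo hwd hwinj (fun v : ℝ => (1 - v^2)^q)).1 (by rw [hwimg]; exact K1 hq)
  have hApt : ∀ u ∈ s, A u
      = (d^q * Real.sqrt d) * (|k*(Real.exp u + Real.exp (-u))| * (1 - (w u)^2)^q) := by
    intro u _
    have hpos : (0:ℝ) < k*(Real.exp u + Real.exp (-u)) := by positivity
    rw [abs_of_pos hpos]
    have hdk : Real.sqrt d * k = Real.sqrt c := by
      rw [hkdef, mul_div_cancel₀]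
      exact (Real.sqrt_pos.2 hd0).ne'
    rw [hAdef, ← hdk]
    ring
  have hIA : IntegrableOn A s := by
    refine ((hIww.const_mul (d^q * Real.sqrt d)).congr ?_)
    filter_upwards [ae_restrict_mem measurableSet_Ioo] with u hu
    rw [hApt u hu, smul_eq_mul]
  have hAint : ∫ u in s, A u
      = (d^q * Real.sqrt d) * ∫ v in Set.Ioo (-1:ℝ) 1, (1 - v^2)^q := by
    rw [hiw, ← MeasureTheory.integral_const_mul]
    refine MeasureTheory.setIntegral_congr_fun measurableSet_Ioo (fun u hu => ?_)
    rw [hApt u hu, smul_eq_mul]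
  -- Bo integrable, integral zero
  have hIBo : IntegrableOn Bo s := by
    apply MeasureTheory.Integrable.mono' hIA
    · apply Measurable.aestronglyMeasurable
      rw [hBodef]
      fun_prop
    · filter_upwards [ae_restrict_mem measurableSet_Ioo] with u hu
      have hw1 := hwpos u hu
      have hE := Real.exp_pos u
      have hF := Real.exp_pos (-u)
      have h1 : (0:ℝ) ≤ d^q * Real.sqrt c :=
        mul_nonneg (Real.rpow_nonneg hd0.le q) (Real.sqrt_nonneg c)
      have h2 : (0:ℝ) ≤ (1 - (w u)^2)^q := Real.rpow_nonneg hw1.le q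
      simp only [Real.norm_eq_abs, hBodef, hAdef]
      rw [abs_mul, abs_mul, abs_of_nonneg h1, abs_of_nonneg h2]
      have h3 : |Real.exp u - Real.exp (-u)| ≤ Real.exp u + Real.exp (-u) := by
        rw [abs_le]; constructor <;> linarith
      exact mul_le_mul_of_nonneg_right (mul_le_mul_of_nonneg_left h3 h1) h2
  have hBo0 : ∫ u in s, Bo u = 0 := by
    have hni : (fun u : ℝ => -u) '' s = s := by
      ext z
      simp only [Set.mem_image, hsdef, Set.mem_Ioo]
      constructor
      · rintro ⟨x, ⟨hx1, hx2⟩, rfl⟩; constructor <;> linarith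
      · rintro ⟨h1, h2⟩; exact ⟨-z, ⟨by linarith, by linarith⟩, by ring⟩
    have hnd : ∀ u ∈ s, HasDerivWithinAt (fun u : ℝ => -u) (-1) s u :=
      fun u _ => (hasDerivAt_id u).neg.hasDerivWithinAt
    have hninj : Set.InjOn (fun u : ℝ => -u) s := fun a _ b _ h => by simpa using h
    have h := MeasureTheory.integral_image_eq_integral_abs_deriv_smul
      measurableSet_Ioo hnd hninj Bo
    rw [hni] at h
    have h2 : ∫ u in s, |(-1:ℝ)| • Bo (-u) = ∫ u in s, - Bo u := by
      refine MeasureTheory.setIntegral_congr_fun measurableSet_Ioo (fun u _ => ?_)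
      simp only [abs_neg, abs_one, one_smul, hBodef, hwneg, neg_neg, neg_sq]
      ring
    rw [h2, MeasureTheory.integral_neg] at h
    linarith
  -- assemble
  have hfin : d^q * Real.sqrt d = x ^ t := by
    rw [Real.sqrt_eq_rpow, ← Real.rpow_add hd0]
    have he : q + 1/2 = t/2 := by rw [hqdef]; ring
    rw [he, ← hxd, ← Real.rpow_natCast x 2, ← Real.rpow_mul hx0.le]
    congr 1
    push_cast
    ring
  conv_lhs => rw [← himg, MeasureTheory.integral_image_eq_integral_abs_deriv_smul
    measurableSet_Ioo hgd hginj]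
  have hmain : ∫ u in s, |2*c*Real.exp (2*u)|
      • (g u ^ q * (1 - g u) ^ q * (g u + l) ^ (-(t/2))) = ∫ u in s, (A u + Bo u) := by
    refine MeasureTheory.setIntegral_congr_fun measurableSet_Ioo (fun u hu => ?_)
    rw [smul_eq_mul]
    exact hpt u hu
  rw [hmain, MeasureTheory.integral_add hIA hIBo, hBo0, add_zero, hAint, K2 hq, hfin]

/-- if `γ ~ Gamma(t/2,1)` and `β ~ Beta(1/2,(1+t)/2)` are independent then
`E[exp(-λ γ/β)] = (√(1+λ) - √λ)^t`, written as an explicit double integral against the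
product of the two densities. -/
theorem stmt_2 (t l : ℝ) (ht : 0 < t) (hl : 0 ≤ l)
    (B : ℝ)
    (hB : B = ∫ y in Set.Ioo (0:ℝ) 1, y ^ ((1:ℝ)/2 - 1) * (1 - y) ^ ((1 + t)/2 - 1)) :
    ∫ x in Set.Ioi (0:ℝ), ∫ y in Set.Ioo (0:ℝ) 1,
        Real.exp (-l * (x / y)) *
          (x ^ (t/2 - 1) * Real.exp (-x) / Real.Gamma (t/2)) *
          (y ^ ((1:ℝ)/2 - 1) * (1 - y) ^ ((1 + t)/2 - 1) / B)
      = (Real.sqrt (1 + l) - Real.sqrt l) ^ t := by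
  have hq : (-1:ℝ) < (1+t)/2 - 1 := by linarith
  have hp : (-1:ℝ) < (1:ℝ)/2 - 1 := by norm_num
  have hBint : IntegrableOn (fun y : ℝ => y ^ ((1:ℝ)/2-1) * (1-y) ^ ((1+t)/2-1))
      (Set.Ioo 0 1) := betaInt hp hq
  have hBpos : 0 < B := by
    rw [hB]
    have hae : 0 ≤ᵐ[volume.restrict (Set.Ioo (0:ℝ) 1)]
        fun y : ℝ => y ^ ((1:ℝ)/2-1) * (1-y) ^ ((1+t)/2-1) := by
      filter_upwards [ae_restrict_mem measurableSet_Ioo] with y hy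
      exact mul_nonneg (Real.rpow_nonneg hy.1.le _)
        (Real.rpow_nonneg (by linarith [hy.2]) _)
    refine (MeasureTheory.setIntegral_pos_iff_support_of_nonneg_ae hae hBint).2 ?_
    have hsub : Set.Ioo (0:ℝ) 1 ⊆ Function.support
        (fun y : ℝ => y ^ ((1:ℝ)/2-1) * (1-y) ^ ((1+t)/2-1)) ∩ Set.Ioo 0 1 := by
      intro y hy
      refine ⟨?_, hy⟩
      have h1 : 0 < y ^ ((1:ℝ)/2-1) := Real.rpow_pos_of_pos hy.1 _
      have h2 : 0 < (1-y) ^ ((1+t)/2-1) := Real.rpow_pos_of_pos (by linarith [hy.2]) _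
      exact ne_of_gt (mul_pos h1 h2)
    calc (0:ENNReal) < volume (Set.Ioo (0:ℝ) 1) := by rw [Real.volume_Ioo]; norm_num
      _ ≤ _ := measure_mono hsub
  have hI : (∫ y in Set.Ioo (0:ℝ) 1,
        y ^ ((1+t)/2 - 1) * (1-y) ^ ((1+t)/2 - 1) * (y+l) ^ (-(t/2)))
      = (Real.sqrt (1 + l) - Real.sqrt l) ^ t * B := by
    rcases hl.eq_or_lt with h0 | hpos
    · subst hB
      rw [← h0]
      rw [Real.sqrt_zero, show (1:ℝ) + 0 = 1 by ring, Real.sqrt_one, sub_zero,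
        Real.one_rpow, one_mul]
      refine MeasureTheory.setIntegral_congr_fun measurableSet_Ioo (fun y hy => ?_)
      have hy0 : (0:ℝ) < y := hy.1
      have he : y ^ ((1+t)/2 - 1) * (y:ℝ) ^ (-(t/2)) = y ^ ((1:ℝ)/2 - 1) := by
        rw [← Real.rpow_add hy0]
        congr 1
        ring
      rw [add_zero]
      calc y ^ ((1+t)/2 - 1) * (1-y) ^ ((1+t)/2 - 1) * y ^ (-(t/2))
          = (y ^ ((1+t)/2 - 1) * y ^ (-(t/2))) * (1-y) ^ ((1+t)/2 - 1) := by ring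
        _ = _ := by rw [he]
    · rw [stepI t l ht hpos, ← hB]
  have ht2 : 0 < t/2 := by linarith
  have hΓ : 0 < Real.Gamma (t/2) := Real.Gamma_pos_of_pos ht2
  -- rewrite integrand pulling out constants
  have h1 : ∀ x y : ℝ, Real.exp (-l * (x / y)) *
          (x ^ (t/2 - 1) * Real.exp (-x) / Real.Gamma (t/2)) *
          (y ^ ((1:ℝ)/2 - 1) * (1 - y) ^ ((1 + t)/2 - 1) / B)
      = (Real.exp (-l * (x / y)) * (x ^ (t/2 - 1) * Real.exp (-x)) *
          (y ^ ((1:ℝ)/2 - 1) * (1 - y) ^ ((1 + t)/2 - 1))) / (Real.Gamma (t/2) * B) :=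
    fun x y => by ring
  simp_rw [h1, integral_div]
  -- Fubini
  have hGint : IntegrableOn (fun x : ℝ => x ^ (t/2-1) * Real.exp (-x)) (Set.Ioi 0) :=
    (Real.GammaIntegral_convergent ht2).congr (Filter.Eventually.of_forall fun x => mul_comm _ _)
  have hprod : Integrable (fun z : ℝ×ℝ => (z.1 ^ (t/2-1) * Real.exp (-z.1)) *
      (z.2 ^ ((1:ℝ)/2-1) * (1-z.2) ^ ((1+t)/2-1)))
      ((volume.restrict (Set.Ioi 0)).prod (volume.restrict (Set.Ioo 0 1))) :=
    Integrable.mul_prod hGint hBint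
  have hFmeas : Measurable (fun z : ℝ×ℝ => Real.exp (-l * (z.1 / z.2)) *
      (z.1 ^ (t/2 - 1) * Real.exp (-z.1)) *
      (z.2 ^ ((1:ℝ)/2 - 1) * (1 - z.2) ^ ((1 + t)/2 - 1))) := by fun_prop
  have hFint : Integrable (fun z : ℝ×ℝ => Real.exp (-l * (z.1 / z.2)) *
      (z.1 ^ (t/2 - 1) * Real.exp (-z.1)) *
      (z.2 ^ ((1:ℝ)/2 - 1) * (1 - z.2) ^ ((1 + t)/2 - 1)))
      ((volume.restrict (Set.Ioi 0)).prod (volume.restrict (Set.Ioo 0 1))) := by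
    apply Integrable.mono' hprod hFmeas.aestronglyMeasurable
    rw [Measure.prod_restrict]
    filter_upwards [ae_restrict_mem (measurableSet_Ioi.prod measurableSet_Ioo)] with z hz
    obtain ⟨hz1, hz2⟩ := hz
    have hx : (0:ℝ) < z.1 := hz1
    have hy : (0:ℝ) < z.2 := hz2.1
    have hy1 : z.2 < 1 := hz2.2
    have he : Real.exp (-l * (z.1 / z.2)) ≤ 1 := by
      rw [Real.exp_le_one_iff]
      have : 0 ≤ l * (z.1 / z.2) := by positivity
      linarith
    have hA : (0:ℝ) ≤ z.1 ^ (t/2-1) * Real.exp (-z.1) := by positivity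
    have hC : (0:ℝ) ≤ z.2 ^ ((1:ℝ)/2-1) * (1-z.2) ^ ((1+t)/2-1) := by
      have h2 : (0:ℝ) ≤ 1 - z.2 := by linarith
      positivity
    rw [Real.norm_eq_abs, abs_of_nonneg (by positivity)]
    calc Real.exp (-l * (z.1 / z.2)) * (z.1 ^ (t/2-1) * Real.exp (-z.1)) *
          (z.2 ^ ((1:ℝ)/2-1) * (1-z.2) ^ ((1+t)/2-1))
        ≤ 1 * (z.1 ^ (t/2-1) * Real.exp (-z.1)) *
          (z.2 ^ ((1:ℝ)/2-1) * (1-z.2) ^ ((1+t)/2-1)) := by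
          apply mul_le_mul_of_nonneg_right (mul_le_mul_of_nonneg_right he hA) hC
      _ = _ := by ring
  have hswap := MeasureTheory.integral_integral_swap
    (f := fun x y : ℝ => Real.exp (-l * (x / y)) *
      (x ^ (t/2 - 1) * Real.exp (-x)) *
      (y ^ ((1:ℝ)/2 - 1) * (1 - y) ^ ((1 + t)/2 - 1))) hFint
  rw [hswap]
  -- inner x integral
  have hinner : ∀ y ∈ Set.Ioo (0:ℝ) 1,
      (∫ x in Set.Ioi (0:ℝ), Real.exp (-l * (x / y)) * (x ^ (t/2 - 1) * Real.exp (-x)) *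
        (y ^ ((1:ℝ)/2 - 1) * (1 - y) ^ ((1 + t)/2 - 1)))
      = Real.Gamma (t/2) * (y ^ ((1+t)/2 - 1) * (1-y) ^ ((1+t)/2 - 1) * (y+l) ^ (-(t/2))) := by
    intro y hy
    have hy0 : (0:ℝ) < y := hy.1
    have hy1 : y < 1 := hy.2
    have hr : (0:ℝ) < 1 + l/y := by positivity
    have hyl : (0:ℝ) < y + l := by linarith [div_nonneg hl hy0.le]
    have hptx : ∀ x : ℝ, Real.exp (-l * (x / y)) * (x ^ (t/2 - 1) * Real.exp (-x)) *
        (y ^ ((1:ℝ)/2 - 1) * (1 - y) ^ ((1 + t)/2 - 1))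
        = (x ^ (t/2 - 1) * Real.exp (-((1 + l/y) * x))) *
          (y ^ ((1:ℝ)/2 - 1) * (1 - y) ^ ((1 + t)/2 - 1)) := by
      intro x
      rw [show -((1 + l/y) * x) = -l * (x/y) + -x by ring, Real.exp_add]
      ring
    rw [MeasureTheory.setIntegral_congr_fun measurableSet_Ioi (fun x _ => hptx x),
      MeasureTheory.integral_mul_const, Real.integral_rpow_mul_exp_neg_mul_Ioi ht2 hr]
    -- now algebra in y
    have h2 : (1:ℝ) + l/y = (y+l)/y := by field_simp
    have h3 : (1:ℝ)/((y+l)/y) = y/(y+l) := by rw [one_div_div]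
    rw [h2, h3, Real.div_rpow hy0.le hyl.le, div_eq_mul_inv, ← Real.rpow_neg hyl.le]
    have h4 : y ^ (t/2) * y ^ ((1:ℝ)/2 - 1) = y ^ ((1+t)/2 - 1) := by
      rw [← Real.rpow_add hy0]
      congr 1
      ring
    calc y ^ (t/2) * (y+l) ^ (-(t/2)) * Real.Gamma (t/2) *
          (y ^ ((1:ℝ)/2 - 1) * (1 - y) ^ ((1 + t)/2 - 1))
        = Real.Gamma (t/2) * ((y ^ (t/2) * y ^ ((1:ℝ)/2 - 1)) * (1 - y) ^ ((1 + t)/2 - 1)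
            * (y+l) ^ (-(t/2))) := by ring
      _ = _ := by rw [h4]
  rw [MeasureTheory.setIntegral_congr_fun measurableSet_Ioo hinner,
    MeasureTheory.integral_const_mul, hI]
  field_simp
end

section
/- Let γ ~ Gamma(t/2, 1) and β ~ Beta((1+t)/2, (1+t)/2) be independent random variables, with t > 0. Then for all λ ≥ 0, E[exp(−λ γ β)] = (2/(1 + √(1+λ)))^t = 2^t / (1+√(1+λ))^t. -/
open MeasureTheory

open Set

namespace Stmt3Aux

lemma meas_fn (p q l : ℝ) :
    Measurable (fun x : ℝ => x ^ p * (1 - x) ^ p * (1 + l * x) ^ q) := by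
  fun_prop


lemma base_int {p : ℝ} (hp : -1 < p) :
    IntegrableOn (fun x : ℝ => x ^ p * (1 - x) ^ p) (Ioo 0 1) := by
  have hmeas : Measurable (fun x : ℝ => x ^ p * (1 - x) ^ p) := by fun_prop
  set C : ℝ := max 1 ((2:ℝ)⁻¹ ^ p) with hC
  have hbound : ∀ x : ℝ, (2:ℝ)⁻¹ ≤ x → x ≤ 1 → x ^ p ≤ C := by
    intro x h1 h2
    rcases le_or_gt 0 p with hp0 | hp0
    · exact le_max_of_le_left (by
        calc x ^ p ≤ 1 ^ p := Real.rpow_le_rpow (by linarith) h2 hp0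
        _ = 1 := Real.one_rpow p)
    · exact le_max_of_le_right (Real.rpow_le_rpow_of_nonpos (by norm_num) h1 hp0.le)
  have h1 : IntegrableOn (fun x : ℝ => x ^ p * (1 - x) ^ p) (Ioc 0 (2:ℝ)⁻¹) := by
    have hint : IntegrableOn (fun x : ℝ => C * x ^ p) (Ioc 0 (2:ℝ)⁻¹) := by
      have := intervalIntegral.intervalIntegrable_rpow' (a := 0) (b := (2:ℝ)⁻¹) hp
      rw [intervalIntegrable_iff, uIoc_of_le (by norm_num)] at this
      exact this.const_mul C
    refine hint.integrable.mono' hmeas.aestronglyMeasurable ?_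
    filter_upwards [ae_restrict_mem measurableSet_Ioc] with x hx
    have hx0 : 0 < x := hx.1
    have hx1 : x ≤ 2⁻¹ := hx.2
    have h1x : (2:ℝ)⁻¹ ≤ 1 - x := by linarith
    have h1x' : (1:ℝ) - x ≤ 1 := by linarith
    rw [Real.norm_eq_abs, abs_of_nonneg (by positivity)]
    calc x ^ p * (1 - x) ^ p ≤ x ^ p * C :=
          mul_le_mul_of_nonneg_left (hbound _ h1x h1x') (Real.rpow_nonneg hx0.le p)
      _ = C * x ^ p := mul_comm _ _
  have h2 : IntegrableOn (fun x : ℝ => x ^ p * (1 - x) ^ p) (Ioc (2:ℝ)⁻¹ 1) := by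
    have hint : IntegrableOn (fun x : ℝ => C * (1 - x) ^ p) (Ioc (2:ℝ)⁻¹ 1) := by
      have h0 := intervalIntegral.intervalIntegrable_rpow' (a := 0) (b := (2:ℝ)⁻¹) hp
      have h1 : IntervalIntegrable (fun x : ℝ => (1 - x) ^ p) volume (1 - 0) (1 - 2⁻¹) :=
        h0.comp_sub_left 1
      rw [intervalIntegrable_iff] at h1
      norm_num at h1
      rw [show (1:ℝ)/2 = 2⁻¹ by norm_num] at h1
      exact h1.const_mul C
    refine hint.integrable.mono' hmeas.aestronglyMeasurable ?_
    filter_upwards [ae_restrict_mem measurableSet_Ioc] with x hx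
    have hx0 : (2:ℝ)⁻¹ < x := hx.1
    have hx1 : x ≤ 1 := hx.2
    rw [Real.norm_eq_abs, abs_of_nonneg
      (mul_nonneg (Real.rpow_nonneg (by linarith) p) (Real.rpow_nonneg (by linarith) p))]
    exact mul_le_mul_of_nonneg_right (hbound _ hx0.le hx1) (Real.rpow_nonneg (by linarith) p)
  have : Ioo (0:ℝ) 1 ⊆ Ioc 0 2⁻¹ ∪ Ioc 2⁻¹ 1 := by
    intro x hx
    rcases le_or_gt x 2⁻¹ with h | h
    · exact Or.inl ⟨hx.1, h⟩
    · exact Or.inr ⟨h, hx.2.le⟩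
  exact (h1.union h2).mono_set this


lemma gen_int {p q l : ℝ} (hp : -1 < p) (hl : 0 ≤ l) :
    IntegrableOn (fun x : ℝ => x ^ p * (1 - x) ^ p * (1 + l * x) ^ q) (Ioo 0 1) := by
  set C : ℝ := max 1 ((1 + l) ^ q) with hC
  have hbound : ∀ x : ℝ, 0 ≤ x → x ≤ 1 → (1 + l * x) ^ q ≤ C := by
    intro x h0 h1
    have hb1 : (1:ℝ) ≤ 1 + l * x := by nlinarith
    have hb2 : 1 + l * x ≤ 1 + l := by nlinarith
    rcases le_or_gt 0 q with hq | hq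
    · exact le_max_of_le_right (Real.rpow_le_rpow (by linarith) hb2 hq)
    · refine le_max_of_le_left ?_
      calc (1 + l * x) ^ q ≤ 1 ^ q :=
            Real.rpow_le_rpow_of_nonpos one_pos hb1 hq.le
        _ = 1 := Real.one_rpow q
  have hmaj : IntegrableOn (fun x : ℝ => C * (x ^ p * (1 - x) ^ p)) (Ioo 0 1) :=
    (base_int hp).const_mul C
  have hmeas : Measurable (fun x : ℝ => x ^ p * (1 - x) ^ p * (1 + l * x) ^ q) := by fun_prop
  refine Integrable.mono' hmaj hmeas.aestronglyMeasurable ?_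
  filter_upwards [ae_restrict_mem measurableSet_Ioo] with x hx
  have h1 : (0:ℝ) ≤ x ^ p * (1 - x) ^ p :=
    mul_nonneg (Real.rpow_nonneg hx.1.le p) (Real.rpow_nonneg (by linarith [hx.2]) p)
  rw [Real.norm_eq_abs, abs_of_nonneg (mul_nonneg h1 (Real.rpow_nonneg (by nlinarith [hx.1.le]) q))]
  calc x ^ p * (1 - x) ^ p * (1 + l * x) ^ q ≤ x ^ p * (1 - x) ^ p * C :=
        mul_le_mul_of_nonneg_left (hbound x hx.1.le hx.2.le) h1
    _ = C * (x ^ p * (1 - x) ^ p) := mul_comm _ _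


lemma moebius {p q l : ℝ} (hl : 0 ≤ l) :
    ∫ u in Ioo (0:ℝ) 1, u ^ p * (1 - u) ^ p * (1 + l * u) ^ q
      = (1 + l) ^ (p + q + 1) *
        ∫ x in Ioo (0:ℝ) 1, x ^ p * (1 - x) ^ p * (1 + l * x) ^ (-(2 * p + q + 2)) := by
  have h1l : (0:ℝ) < 1 + l := by linarith
  set ψ : ℝ → ℝ := fun x => (1 - x) / (1 + l * x) with hψ
  have hD : ∀ x : ℝ, x ∈ Ioo (0:ℝ) 1 → 0 < 1 + l * x := by
    intro x hx; nlinarith [hx.1]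
  have hmaps : ∀ x : ℝ, x ∈ Ioo (0:ℝ) 1 → ψ x ∈ Ioo (0:ℝ) 1 := by
    intro x hx
    have h := hD x hx
    constructor
    · exact div_pos (by linarith [hx.2]) h
    · rw [div_lt_one h]; nlinarith [hx.1]
  have hinv : ∀ x : ℝ, x ∈ Ioo (0:ℝ) 1 → ψ (ψ x) = x := by
    intro x hx
    have h := hD x hx
    have h2 := hD _ (hmaps x hx)
    simp only [hψ]
    rw [← mul_div_assoc, one_sub_div h.ne', one_add_div h.ne', div_div_div_cancel_right₀ h.ne']
    rw [show 1 + l * x + l * (1 - x) = 1 + l by ring, div_eq_iff h1l.ne']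
    ring
  have hinj : InjOn ψ (Ioo 0 1) := by
    intro x hx y hy hxy
    rw [← hinv x hx, ← hinv y hy, hxy]
  have himg : ψ '' Ioo 0 1 = Ioo 0 1 := by
    apply Subset.antisymm
    · rintro u ⟨x, hx, rfl⟩; exact hmaps x hx
    · intro u hu; exact ⟨ψ u, hmaps u hu, hinv u hu⟩
  have hderiv : ∀ x ∈ Ioo (0:ℝ) 1,
      HasDerivWithinAt ψ (-(1 + l) / (1 + l * x) ^ 2) (Ioo 0 1) x := by
    intro x hx
    have h := hD x hx
    have h' := ((hasDerivAt_const x (1:ℝ)).sub (hasDerivAt_id x)).div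
      (((hasDerivAt_const x (1:ℝ)).add ((hasDerivAt_id x).const_mul l))) h.ne'
    simp only [id_eq] at h'
    refine h'.hasDerivWithinAt.congr_deriv (Eq.symm ?_)
    simp only [Pi.add_apply, Pi.sub_apply, id_eq]
    ring
  have key := integral_image_eq_integral_abs_deriv_smul measurableSet_Ioo hderiv hinj
    (fun u => u ^ p * (1 - u) ^ p * (1 + l * u) ^ q)
  rw [himg] at key
  rw [key, ← integral_const_mul]
  apply setIntegral_congr_fun measurableSet_Ioo
  intro x hx
  have h := hD x hx
  have hx0 := hx.1
  have hx1 := hx.2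
  have h1x : (0:ℝ) < 1 - x := by linarith
  have e0 : ψ x = (1 - x) / (1 + l * x) := rfl
  have e1 : 1 - ψ x = (1 + l) * x / (1 + l * x) := by
    rw [e0]; field_simp; ring
  have e2 : 1 + l * ψ x = (1 + l) / (1 + l * x) := by
    rw [e0]; field_simp; ring
  have habs : |(-(1 + l) / (1 + l * x) ^ 2)| = (1 + l) / (1 + l * x) ^ 2 := by
    rw [abs_div, abs_neg, abs_of_pos h1l, abs_of_pos (by positivity)]
  simp only [smul_eq_mul, habs, e1, e2]
  simp only [e0]
  rw [Real.div_rpow h1x.le h.le, Real.div_rpow (by positivity) h.le,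
    Real.div_rpow h1l.le h.le, Real.mul_rpow h1l.le hx0.le,
    show -(2*p+q+2) = -p + (-p + (-q + -(2:ℕ))) by push_cast; ring,
    Real.rpow_add h, Real.rpow_add h, Real.rpow_add h,
    Real.rpow_neg h.le, Real.rpow_neg h.le, Real.rpow_neg h.le,
    Real.rpow_natCast, Real.rpow_add h1l, Real.rpow_add h1l, Real.rpow_one]
  have hp1 : (1 + l * x) ^ p ≠ 0 := by positivity
  have hq1 : (1 + l * x) ^ q ≠ 0 := by positivity
  field_simp


lemma phi_sub {p l : ℝ} (hp : -1 < p) (hl : 0 ≤ l) :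
    ∫ u in Ioo (0:ℝ) 1, u ^ p * (1 - u) ^ p
      = ((1 + Real.sqrt (1 + l)) ^ 2 / 4) ^ p * ((1 + Real.sqrt (1 + l)) / 4) *
        ((∫ x in Ioo (0:ℝ) 1, x ^ p * (1 - x) ^ p * (1 + l * x) ^ (-(p + 1/2)))
          + Real.sqrt (1 + l) *
            ∫ x in Ioo (0:ℝ) 1, x ^ p * (1 - x) ^ p * (1 + l * x) ^ (-(p + 3/2))) := by
  have h1l : (0:ℝ) < 1 + l := by linarith
  set μ : ℝ := Real.sqrt (1 + l) with hμ
  have hμ2 : μ ^ 2 = 1 + l := Real.sq_sqrt h1l.le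
  have hμ1 : 1 ≤ μ := by nlinarith [Real.sqrt_nonneg (1+l)]
  have hμ0 : 0 < μ := by linarith
  set S : ℝ → ℝ := fun x => Real.sqrt (1 + l * x) with hS
  set φ : ℝ → ℝ := fun x => (1 + ((μ + 1) * x - 1) / S x) / 2 with hφ
  set φ' : ℝ → ℝ := fun x => (μ + 1) * (μ + (1 + l * x)) / (4 * ((1 + l * x) * S x)) with hφ'
  have hD : ∀ x : ℝ, 0 ≤ x → 0 < 1 + l * x := by intro x hx; nlinarith
  have hSpos : ∀ x : ℝ, 0 ≤ x → 0 < S x := fun x hx => Real.sqrt_pos.mpr (hD x hx)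
  have hS2 : ∀ x : ℝ, 0 ≤ x → S x ^ 2 = 1 + l * x := fun x hx => Real.sq_sqrt (hD x hx).le
  -- derivative
  have hderiv : ∀ x : ℝ, 0 ≤ x → HasDerivAt φ (φ' x) x := by
    intro x hx
    have hDx := hD x hx
    have hSx := hSpos x hx
    have hnum : HasDerivAt (fun y : ℝ => (μ + 1) * y - 1) (μ + 1) x := by
      simpa using ((hasDerivAt_id x).const_mul (μ + 1)).sub_const 1
    have hin : HasDerivAt (fun y : ℝ => 1 + l * y) l x := by
      simpa using ((hasDerivAt_id x).const_mul l).const_add 1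
    have hSd : HasDerivAt S (1 / (2 * S x) * l) x :=
      (Real.hasDerivAt_sqrt hDx.ne').comp x hin
    have hq : HasDerivAt (fun y => ((μ + 1) * y - 1) / S y)
        (((μ + 1) * S x - ((μ + 1) * x - 1) * (1 / (2 * S x) * l)) / S x ^ 2) x :=
      hnum.div hSd hSx.ne'
    have := (hq.const_add 1).div_const 2
    refine this.congr_deriv (Eq.symm ?_)
    have hS2x := hS2 x hx
    show (μ + 1) * (μ + (1 + l * x)) / (4 * ((1 + l * x) * S x)) = _
    rw [show ((μ + 1) * S x - ((μ + 1) * x - 1) * (1 / (2 * S x) * l)) / S x ^ 2 / 2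
      = (2 * (μ + 1) * S x ^ 2 - ((μ + 1) * x - 1) * l) / (4 * (S x ^ 2 * S x)) by
        field_simp; ring, hS2x]
    congr 1
    linear_combination hμ2
  have hcont : ContinuousOn φ (Icc 0 1) := fun x hx =>
    (hderiv x hx.1).continuousAt.continuousWithinAt
  have hmono : StrictMonoOn φ (Icc 0 1) := by
    apply strictMonoOn_of_deriv_pos (convex_Icc 0 1) hcont
    intro x hx
    rw [interior_Icc] at hx
    rw [(hderiv x hx.1.le).deriv]
    have h1 := hD x hx.1.le
    have h2 := hSpos x hx.1.le
    show 0 < (μ + 1) * (μ + (1 + l * x)) / (4 * ((1 + l * x) * S x))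
    apply div_pos (by nlinarith) (by nlinarith)
  have hφ0 : φ 0 = 0 := by simp [hφ, hS]
  have hφ1 : φ 1 = 1 := by
    have hh : S 1 = μ := by rw [hS, hμ]; norm_num
    show (1 + ((μ + 1) * 1 - 1) / S 1) / 2 = 1
    rw [hh]; field_simp; ring
  have hmaps : ∀ x ∈ Ioo (0:ℝ) 1, φ x ∈ Ioo (0:ℝ) 1 := by
    intro x hx
    constructor
    · rw [← hφ0]
      exact hmono (left_mem_Icc.mpr zero_le_one) ⟨hx.1.le, hx.2.le⟩ hx.1
    · rw [← hφ1]
      exact hmono ⟨hx.1.le, hx.2.le⟩ (right_mem_Icc.mpr zero_le_one) hx.2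
  have hinj : InjOn φ (Ioo 0 1) := hmono.injOn.mono Ioo_subset_Icc_self
  have himg : φ '' Ioo 0 1 = Ioo 0 1 := by
    apply Subset.antisymm
    · rintro u ⟨x, hx, rfl⟩; exact hmaps x hx
    · have := intermediate_value_Ioo zero_le_one hcont
      rwa [hφ0, hφ1] at this
  have hdw : ∀ x ∈ Ioo (0:ℝ) 1, HasDerivWithinAt φ (φ' x) (Ioo 0 1) x := fun x hx =>
    (hderiv x hx.1.le).hasDerivWithinAt
  have key := integral_image_eq_integral_abs_deriv_smul measurableSet_Ioo hdw hinj
    (fun u => u ^ p * (1 - u) ^ p)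
  rw [himg] at key
  rw [key]
  have hpt : ∀ x ∈ Ioo (0:ℝ) 1, |φ' x| • (φ x ^ p * (1 - φ x) ^ p)
      = ((1 + μ) ^ 2 / 4) ^ p * ((1 + μ) / 4) *
        (x ^ p * (1 - x) ^ p * (1 + l * x) ^ (-(p + 1/2))
          + μ * (x ^ p * (1 - x) ^ p * (1 + l * x) ^ (-(p + 3/2)))) := by
    intro x hx
    have hDx := hD x hx.1.le
    have hSx := hSpos x hx.1.le
    have hS2x := hS2 x hx.1.le
    have hφx := hmaps x hx
    have hppos : 0 < φ' x := by
      show 0 < (μ + 1) * (μ + (1 + l * x)) / (4 * ((1 + l * x) * S x))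
      apply div_pos (by nlinarith) (by nlinarith)
    have hkey : φ x * (1 - φ x) = ((1 + μ) ^ 2 / 4) * x * (1 - x) / (1 + l * x) := by
      show (1 + ((μ + 1) * x - 1) / S x) / 2 * (1 - (1 + ((μ + 1) * x - 1) / S x) / 2)
        = ((1 + μ) ^ 2 / 4) * x * (1 - x) / (1 + l * x)
      rw [show (1 + ((μ + 1) * x - 1) / S x) / 2 * (1 - (1 + ((μ + 1) * x - 1) / S x) / 2)
        = (S x ^ 2 - ((μ + 1) * x - 1) ^ 2) / (4 * S x ^ 2) by field_simp; ring, hS2x,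
        div_eq_div_iff (by positivity) hDx.ne']
      linear_combination (-(1 + l * x) * x) * hμ2
    have e1 : φ x ^ p * (1 - φ x) ^ p = (φ x * (1 - φ x)) ^ p :=
      (Real.mul_rpow hφx.1.le (by linarith [hφx.2])).symm
    have e2 : (((1 + μ) ^ 2 / 4) * x * (1 - x) / (1 + l * x)) ^ p
        = ((1 + μ) ^ 2 / 4) ^ p * x ^ p * (1 - x) ^ p / (1 + l * x) ^ p := by
      have hc4 : (0:ℝ) ≤ (1 + μ) ^ 2 / 4 := by positivity
      have hxx : (0:ℝ) ≤ x := hx.1.le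
      have h1x : (0:ℝ) ≤ 1 - x := by linarith [hx.2]
      rw [Real.div_rpow (mul_nonneg (mul_nonneg hc4 hxx) h1x) hDx.le,
        Real.mul_rpow (mul_nonneg hc4 hxx) h1x,
        Real.mul_rpow hc4 hxx]
    have e3 : (1 + l * x) ^ (-(p + 1/2)) = ((1 + l * x) ^ p * S x)⁻¹ := by
      rw [Real.rpow_neg hDx.le, Real.rpow_add hDx, ← Real.sqrt_eq_rpow]
    have e4 : (1 + l * x) ^ (-(p + 3/2)) = ((1 + l * x) ^ p * ((1 + l * x) * S x))⁻¹ := by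
      rw [Real.rpow_neg hDx.le, show p + 3/2 = p + 1 + 1/2 by ring, Real.rpow_add hDx,
        Real.rpow_add hDx, Real.rpow_one, ← Real.sqrt_eq_rpow, mul_assoc]
    rw [smul_eq_mul, abs_of_pos hppos, e1, hkey, e2, e3, e4]
    show (μ + 1) * (μ + (1 + l * x)) / (4 * ((1 + l * x) * S x))
        * (((1 + μ) ^ 2 / 4) ^ p * x ^ p * (1 - x) ^ p / (1 + l * x) ^ p) = _
    have hDp : (0:ℝ) < (1 + l * x) ^ p := Real.rpow_pos_of_pos hDx p
    field_simp
    ring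
  rw [setIntegral_congr_fun measurableSet_Ioo hpt, integral_const_mul]
  congr 1
  rw [integral_add (gen_int hp hl) ((gen_int hp hl).const_mul μ), integral_const_mul]


lemma lhs_eq {t l B : ℝ} (ht : 0 < t) (hl : 0 ≤ l) (hBpos : 0 < B) :
    (∫ x in Ioi (0:ℝ), ∫ y in Ioo (0:ℝ) 1,
        Real.exp (-l * (x * y)) *
          (x ^ (t/2 - 1) * Real.exp (-x) / Real.Gamma (t/2)) *
          (y ^ ((1 + t)/2 - 1) * (1 - y) ^ ((1 + t)/2 - 1) / B))
      = (∫ y in Ioo (0:ℝ) 1, y ^ ((1 + t)/2 - 1) * (1 - y) ^ ((1 + t)/2 - 1) *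
          (1 + l * y) ^ (-(((1 + t)/2 - 1) + 1/2))) / B := by
  have hb : 0 < t/2 := by linarith
  have hΓ : 0 < Real.Gamma (t/2) := Real.Gamma_pos_of_pos hb
  set p : ℝ := (1 + t)/2 - 1 with hpdef
  have hp : -1 < p := by rw [hpdef]; linarith
  set G : ℝ → ℝ → ℝ := fun x y => Real.exp (-l * (x * y)) *
      (x ^ (t/2 - 1) * Real.exp (-x) / Real.Gamma (t/2)) *
      (y ^ p * (1 - y) ^ p / B) with hG
  have hGmeas : Measurable (Function.uncurry G) := by
    rw [hG]; fun_prop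
  have hGnonneg : ∀ x ∈ Ioi (0:ℝ), ∀ y ∈ Ioo (0:ℝ) 1, 0 ≤ G x y := by
    intro x hx y hy
    have hx0 : (0:ℝ) < x := hx
    have h1 : (0:ℝ) ≤ x ^ (t/2 - 1) * Real.exp (-x) / Real.Gamma (t/2) := by positivity
    have h2 : (0:ℝ) ≤ y ^ p * (1 - y) ^ p / B :=
      div_nonneg (mul_nonneg (Real.rpow_nonneg hy.1.le _)
        (Real.rpow_nonneg (by linarith [hy.2]) _)) hBpos.le
    exact mul_nonneg (mul_nonneg (Real.exp_nonneg _) h1) h2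
  have hGbound : ∀ x ∈ Ioi (0:ℝ), ∀ y ∈ Ioo (0:ℝ) 1,
      G x y ≤ (x ^ (t/2 - 1) * Real.exp (-x) / Real.Gamma (t/2) / B) *
        (y ^ p * (1 - y) ^ p) := by
    intro x hx y hy
    have hx0 : (0:ℝ) < x := hx
    have he : Real.exp (-l * (x * y)) ≤ 1 := by
      rw [Real.exp_le_one_iff]
      have : 0 ≤ l * (x * y) := mul_nonneg hl (mul_nonneg hx0.le hy.1.le)
      linarith
    have h1 : (0:ℝ) ≤ x ^ (t/2 - 1) * Real.exp (-x) / Real.Gamma (t/2) := by positivity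
    have h2 : (0:ℝ) ≤ y ^ p * (1 - y) ^ p :=
      mul_nonneg (Real.rpow_nonneg hy.1.le _) (Real.rpow_nonneg (by linarith [hy.2]) _)
    calc G x y ≤ 1 * (x ^ (t/2 - 1) * Real.exp (-x) / Real.Gamma (t/2)) *
          (y ^ p * (1 - y) ^ p / B) := by
            apply mul_le_mul_of_nonneg_right (mul_le_mul_of_nonneg_right he h1)
            exact div_nonneg h2 hBpos.le
      _ = (x ^ (t/2 - 1) * Real.exp (-x) / Real.Gamma (t/2) / B) *
          (y ^ p * (1 - y) ^ p) := by ring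
  have hInt_y : ∀ x ∈ Ioi (0:ℝ), IntegrableOn (fun y => G x y) (Ioo 0 1) := by
    intro x hx
    have hmaj : IntegrableOn (fun y : ℝ =>
        (x ^ (t/2 - 1) * Real.exp (-x) / Real.Gamma (t/2) / B) * (y ^ p * (1 - y) ^ p))
        (Ioo 0 1) := (base_int hp).const_mul _
    refine hmaj.mono' ((hGmeas.comp measurable_prodMk_left).aestronglyMeasurable) ?_
    filter_upwards [ae_restrict_mem measurableSet_Ioo] with y hy
    rw [Real.norm_eq_abs, abs_of_nonneg (hGnonneg x hx y hy)]
    exact hGbound x hx y hy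
  set Bi : ℝ := ∫ y in Ioo (0:ℝ) 1, y ^ p * (1 - y) ^ p with hBi
  have hIntNorm : Integrable (fun x => ∫ y in Ioo (0:ℝ) 1, ‖G x y‖)
      (volume.restrict (Ioi 0)) := by
    have hmaj : IntegrableOn (fun x : ℝ =>
        (Bi / (B * Real.Gamma (t/2))) * (Real.exp (-x) * x ^ (t/2 - 1))) (Ioi 0) :=
      (Real.GammaIntegral_convergent hb).const_mul _
    refine hmaj.mono' ?_ ?_
    · exact hGmeas.aestronglyMeasurable.norm.integral_prod_right'
    · filter_upwards [ae_restrict_mem measurableSet_Ioi] with x hx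
      have h0 : 0 ≤ ∫ y in Ioo (0:ℝ) 1, ‖G x y‖ :=
        integral_nonneg fun y => norm_nonneg _
      rw [Real.norm_eq_abs, abs_of_nonneg h0]
      have h1 : ∫ y in Ioo (0:ℝ) 1, ‖G x y‖
          ≤ ∫ y in Ioo (0:ℝ) 1, (x ^ (t/2 - 1) * Real.exp (-x) / Real.Gamma (t/2) / B) *
            (y ^ p * (1 - y) ^ p) := by
        apply integral_mono_ae (hInt_y x hx).norm ((base_int hp).const_mul _)
        filter_upwards [ae_restrict_mem measurableSet_Ioo] with y hy
        rw [Real.norm_eq_abs, abs_of_nonneg (hGnonneg x hx y hy)]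
        exact hGbound x hx y hy
      refine h1.trans (le_of_eq ?_)
      rw [integral_const_mul, ← hBi]
      ring
  have hGprod : Integrable (Function.uncurry G)
      ((volume.restrict (Ioi 0)).prod (volume.restrict (Ioo 0 1))) := by
    refine (integrable_prod_iff hGmeas.aestronglyMeasurable).2 ⟨?_, hIntNorm⟩
    filter_upwards [ae_restrict_mem measurableSet_Ioi] with x hx
    exact hInt_y x hx
  have hswap : (∫ x in Ioi (0:ℝ), ∫ y in Ioo (0:ℝ) 1, G x y)
      = ∫ y in Ioo (0:ℝ) 1, ∫ x in Ioi (0:ℝ), G x y := integral_integral_swap hGprod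
  have hinner : ∀ y ∈ Ioo (0:ℝ) 1, (∫ x in Ioi (0:ℝ), G x y)
      = y ^ p * (1 - y) ^ p * (1 + l * y) ^ (-(p + 1/2)) / B := by
    intro y hy
    have hy1 : (0:ℝ) < 1 + l * y := by nlinarith [hy.1]
    have e : ∀ x : ℝ, G x y = (x ^ (t/2 - 1) * Real.exp (-(((1 + l * y)) * x))) *
        (y ^ p * (1 - y) ^ p / (Real.Gamma (t/2) * B)) := by
      intro x
      rw [hG]
      simp only
      have hexp : Real.exp (-l * (x * y)) * Real.exp (-x)
          = Real.exp (-((1 + l * y) * x)) := by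
        rw [← Real.exp_add]; ring_nf
      rw [← hexp]
      ring
    rw [setIntegral_congr_fun measurableSet_Ioi (fun x _ => e x), integral_mul_const,
      Real.integral_rpow_mul_exp_neg_mul_Ioi hb hy1]
    have h2 : ((1:ℝ)/(1 + l * y)) ^ (t/2) = (1 + l * y) ^ (-(p + 1/2)) := by
      rw [show -(p + 1/2) = -(t/2) by rw [hpdef]; ring, one_div,
        Real.rpow_neg hy1.le, ← Real.inv_rpow hy1.le]
    rw [h2]
    field_simp
  show (∫ x in Ioi (0:ℝ), ∫ y in Ioo (0:ℝ) 1, G x y) = _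
  rw [hswap, setIntegral_congr_fun measurableSet_Ioo (fun y hy => hinner y hy), integral_div]


lemma B_pos {p : ℝ} (hp : -1 < p) :
    0 < ∫ y in Ioo (0:ℝ) 1, y ^ p * (1 - y) ^ p := by
  rw [setIntegral_pos_iff_support_of_nonneg_ae]
  · have h : (Function.support fun y : ℝ => y ^ p * (1 - y) ^ p) ∩ Ioo 0 1 = Ioo (0:ℝ) 1 := by
      rw [inter_eq_right]
      intro y hy
      rw [Function.mem_support]
      exact mul_ne_zero (Real.rpow_pos_of_pos hy.1 _).ne'
        (Real.rpow_pos_of_pos (by linarith [hy.2]) _).ne'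
    rw [h]
    simp [Real.volume_Ioo]
  · refine Filter.eventually_of_mem (self_mem_ae_restrict measurableSet_Ioo) ?_
    exact fun y hy => (mul_pos (Real.rpow_pos_of_pos hy.1 _)
      (Real.rpow_pos_of_pos (by linarith [hy.2]) _)).le
  · exact base_int hp

end Stmt3Aux

open Stmt3Aux

/-- if `γ ~ Gamma(t/2,1)` and `β ~ Beta((1+t)/2,(1+t)/2)` are independent then
`E[exp(-λ γ β)] = (2/(1+√(1+λ)))^t = 2^t/(1+√(1+λ))^t`, written as a double integral. -/
theorem stmt_3 (t l : ℝ) (ht : 0 < t) (hl : 0 ≤ l)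
    (B : ℝ)
    (hB : B = ∫ y in Set.Ioo (0:ℝ) 1, y ^ ((1 + t)/2 - 1) * (1 - y) ^ ((1 + t)/2 - 1)) :
    (∫ x in Set.Ioi (0:ℝ), ∫ y in Set.Ioo (0:ℝ) 1,
        Real.exp (-l * (x * y)) *
          (x ^ (t/2 - 1) * Real.exp (-x) / Real.Gamma (t/2)) *
          (y ^ ((1 + t)/2 - 1) * (1 - y) ^ ((1 + t)/2 - 1) / B))
      = (2 / (1 + Real.sqrt (1 + l))) ^ t ∧
    (2 / (1 + Real.sqrt (1 + l))) ^ t = 2 ^ t / (1 + Real.sqrt (1 + l)) ^ t := by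
  have h1l : (0:ℝ) < 1 + l := by linarith
  set μ : ℝ := Real.sqrt (1 + l) with hμdef
  have hμ2 : μ ^ 2 = 1 + l := Real.sq_sqrt h1l.le
  have hμ1 : 1 ≤ μ := by nlinarith [Real.sqrt_nonneg (1 + l)]
  have hμpos : (0:ℝ) < (1 + μ) / 2 := by linarith
  set p : ℝ := (1 + t)/2 - 1 with hpdef
  have hp : -1 < p := by rw [hpdef]; linarith
  have hBpos : 0 < B := by rw [hB]; exact B_pos hp
  set I : ℝ := ∫ x in Ioo (0:ℝ) 1, x ^ p * (1 - x) ^ p * (1 + l * x) ^ (-(p + 1/2)) with hI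
  set J : ℝ := ∫ x in Ioo (0:ℝ) 1, x ^ p * (1 - x) ^ p * (1 + l * x) ^ (-(p + 3/2)) with hJ
  have hIJ : I = μ * J := by
    have h := moebius (p := p) (q := -(p + 1/2)) (l := l) hl
    rw [show p + -(p + 1/2) + 1 = (1:ℝ)/2 by ring,
      show -(2 * p + -(p + 1/2) + 2) = -(p + 3/2) by ring, ← Real.sqrt_eq_rpow] at h
    rw [hI, hJ, h, hμdef]
  have hphi := phi_sub hp hl
  rw [← hμdef, ← hI, ← hJ, ← hIJ] at hphi
  have hBt : B = ((1 + μ)/2) ^ t * I := by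
    rw [hB, hphi]
    have hc : ((1 + μ) ^ 2 / 4) ^ p = ((1 + μ)/2) ^ (t - 1) := by
      rw [show (1 + μ) ^ 2 / 4 = ((1 + μ)/2) ^ (2:ℕ) by ring,
        ← Real.rpow_natCast ((1 + μ)/2) 2, ← Real.rpow_mul hμpos.le]
      norm_num
      rw [show (2:ℝ) * p = t - 1 by rw [hpdef]; ring]
    have hsplit : ((1 + μ)/2) ^ t = ((1 + μ)/2) ^ (t - 1) * ((1 + μ)/2) := by
      rw [← Real.rpow_add_one hμpos.ne']
      norm_num
    rw [hc, hsplit]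
    ring
  have hlhs := lhs_eq (B := B) ht hl hBpos
  rw [← hpdef, ← hI] at hlhs
  have hpow : (0:ℝ) < ((1 + μ)/2) ^ t := Real.rpow_pos_of_pos hμpos t
  constructor
  · have hIne : I ≠ 0 := by
      intro h0
      rw [hBt, h0, mul_zero] at hBpos
      exact lt_irrefl _ hBpos
    rw [hlhs, hBt, show (2:ℝ) / (1 + μ) = ((1 + μ)/2)⁻¹ by rw [inv_div],
      Real.inv_rpow hμpos.le]
    field_simp
  · exact Real.div_rpow (by norm_num) (by linarith) t
end

section
/- For every λ ≥ 0, log((1 + √(1+λ))/2) = (1/2) ∫₀^∞ (1 − e^{−λu}) u^{-1} n(u) du, where n(u) = ∫₀¹ e^{−u/a} π^{-1} (a(1−a))^{-1/2} da is the Laplace transform of the reciprocal 1/G of an arcsine variable G ~ Beta(1/2,1/2). Thus the subordinator with Laplace exponent ψ(λ) = log((1+√(1+λ))/2) has Lévy density (1/2) u^{-1} E[e^{-u/G}] and no drift. -/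
open MeasureTheory Real

open Set



noncomputable def wfn (a : ℝ) : ℝ := π⁻¹ * (a * (1 - a)) ^ (-(1/2 : ℝ))

lemma wfn_meas : Measurable wfn := by unfold wfn; fun_prop

lemma wfn_nonneg (a : ℝ) : 0 ≤ wfn a := by
  unfold wfn
  rcases le_or_gt 0 (a * (1-a)) with h | h
  · positivity
  · rw [Real.rpow_def_of_neg h]
    have hc : Real.cos (-(1/2:ℝ) * π) = 0 := by
      rw [show (-(1/2:ℝ)) * π = -(π/2) by ring, Real.cos_neg, Real.cos_pi_div_two]
    rw [hc]
    simp

lemma expInt {s : ℝ} (hs : 0 < s) :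
    ∫ u in Ioi (0:ℝ), Real.exp (-(s * u)) = s⁻¹ := by
  have h := integral_comp_mul_left_Ioi (fun x => Real.exp (-x)) 0 hs
  simp only [mul_zero, smul_eq_mul] at h
  rw [integral_exp_neg_Ioi_zero, mul_one] at h
  exact h

lemma sqrtInt {c : ℝ} (hc : 1 ≤ c) :
    ∫ t in Ioi (0:ℝ), (c + t^2)⁻¹ = π / (2 * Real.sqrt c) := by
  have hc0 : (0:ℝ) < c := lt_of_lt_of_le one_pos hc
  have hsc : 0 < Real.sqrt c := Real.sqrt_pos.mpr hc0
  have key : ∀ x : ℝ, (1 + ((Real.sqrt c)⁻¹ * x)^2)⁻¹ = c * (c + x^2)⁻¹ := by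
    intro x
    have h1 : ((Real.sqrt c)⁻¹ * x)^2 = x^2 / c := by
      rw [mul_pow, inv_pow, Real.sq_sqrt hc0.le]; ring
    have h2 : (1 + x^2/c) = (c + x^2)/c := by field_simp
    rw [h1, h2, inv_div, div_eq_mul_inv, mul_comm]
  have h := integral_comp_mul_left_Ioi (fun x => (1 + x^2)⁻¹) 0 (inv_pos.mpr hsc)
  simp only [mul_zero, integral_Ioi_inv_one_add_sq, Real.arctan_zero, sub_zero,
    inv_inv, smul_eq_mul] at h
  simp only [key] at h
  rw [MeasureTheory.integral_const_mul] at h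
  have hcc : Real.sqrt c * Real.sqrt c = c := Real.mul_self_sqrt hc0.le
  have hI : (∫ x in Ioi (0:ℝ), (c + x^2)⁻¹) = c⁻¹ * (Real.sqrt c * (π/2)) := by
    rw [← h]; field_simp
  rw [hI]
  have := hsc.ne'
  field_simp
  linear_combination hcc

noncomputable def covf (t : ℝ) : ℝ := (1 + t^2)⁻¹
noncomputable def covf' (t : ℝ) : ℝ := -(2*t) / (1 + t^2)^2

lemma covf_deriv : ∀ t ∈ Ioi (0:ℝ), HasDerivWithinAt covf (covf' t) (Ioi 0) t := by
  intro t _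
  have h : HasDerivAt (fun t : ℝ => 1 + t^2) (2*t) t := by
    simpa using ((hasDerivAt_pow 2 t).const_add 1)
  have := h.inv (by positivity)
  exact this.hasDerivWithinAt

lemma covf_inj : InjOn covf (Ioi 0) := by
  intro a ha b hb h
  simp only [covf, inv_inj, add_right_inj] at h
  have ha' : (0:ℝ) < a := ha
  have hb' : (0:ℝ) < b := hb
  apply le_antisymm <;> nlinarith

lemma covf_image : covf '' Ioi 0 = Ioo (0:ℝ) 1 := by
  ext y
  constructor
  · rintro ⟨t, ht, rfl⟩
    have ht' : (0:ℝ) < t := ht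
    constructor
    · simp only [covf]
      positivity
    · rw [covf, inv_lt_one_iff₀]
      right; nlinarith
  · rintro ⟨hy0, hy1⟩
    refine ⟨Real.sqrt ((1-y)/y), ?_, ?_⟩
    · exact Real.sqrt_pos.mpr (div_pos (by linarith) hy0)
    · have h2 : Real.sqrt ((1-y)/y) ^ 2 = (1-y)/y :=
        Real.sq_sqrt (div_nonneg (by linarith) hy0.le)
      have hy0' : y ≠ 0 := hy0.ne'
      rw [covf, h2]
      rw [show 1 + (1-y)/y = 1/y by field_simp; ring]
      simp
lemma cov_pt {s : ℝ} (hs : 0 ≤ s) {t : ℝ} (ht : 0 < t) :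
    |covf' t| • (wfn (covf t) * (1 + s * covf t)⁻¹) = 2 * π⁻¹ * ((1+s) + t^2)⁻¹ := by
  have h1 : (0:ℝ) < 1 + t^2 := by positivity
  have habs : |covf' t| = 2*t / (1+t^2)^2 := by
    rw [covf', abs_div, abs_neg, abs_of_nonneg (by positivity : (0:ℝ) ≤ 2*t),
      abs_of_nonneg (by positivity : (0:ℝ) ≤ (1+t^2)^2)]
  have hprod : covf t * (1 - covf t) = (t / (1+t^2))^2 := by
    rw [covf]; field_simp; ring
  have hrpow : (covf t * (1 - covf t)) ^ (-(1/2:ℝ)) = (1+t^2) / t := by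
    rw [hprod]
    have hy : (0:ℝ) ≤ t / (1+t^2) := by positivity
    rw [← Real.rpow_natCast (t/(1+t^2)) 2, ← Real.rpow_mul hy]
    norm_num
    rw [Real.rpow_neg_one]
    field_simp
  have hres : (1 + s * covf t)⁻¹ = (1+t^2) / ((1+s) + t^2) := by
    rw [covf]
    rw [inv_eq_iff_eq_inv]
    field_simp
    ring
  rw [smul_eq_mul, habs, wfn, hrpow, hres]
  field_simp

lemma arcInt {s : ℝ} (hs : 0 ≤ s) :
    IntegrableOn (fun a => wfn a * (1 + s*a)⁻¹) (Ioo (0:ℝ) 1) ∧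
    ∫ a in Ioo (0:ℝ) 1, wfn a * (1 + s*a)⁻¹ = (Real.sqrt (1+s))⁻¹ := by
  have hderiv : ∀ t ∈ Ioi (0:ℝ), HasDerivWithinAt covf (covf' t) (Ioi 0) t := covf_deriv
  have hinj : InjOn covf (Ioi 0) := covf_inj
  have himg : covf '' Ioi 0 = Ioo (0:ℝ) 1 := covf_image
  set g : ℝ → ℝ := fun a => wfn a * (1 + s*a)⁻¹ with hg
  have heq : ∀ t ∈ Ioi (0:ℝ), |covf' t| • g (covf t) = 2 * π⁻¹ * ((1+s) + t^2)⁻¹ :=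
    fun t ht => cov_pt hs ht
  have hint2 : IntegrableOn (fun t => 2 * π⁻¹ * ((1+s) + t^2)⁻¹) (Ioi (0:ℝ)) := by
    refine Integrable.const_mul ?_ _
    refine Integrable.mono (integrable_inv_one_add_sq.restrict (s := Ioi 0)) ?_ ?_
    · apply Measurable.aestronglyMeasurable
      fun_prop
    · filter_upwards with t
      have e1 : (0:ℝ) ≤ ((1+s) + t^2)⁻¹ := by positivity
      have e2 : (0:ℝ) ≤ (1 + t^2)⁻¹ := by positivity
      rw [Real.norm_eq_abs, Real.norm_eq_abs, abs_of_nonneg e1, abs_of_nonneg e2]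
      gcongr
      linarith
  have hintIff := integrableOn_image_iff_integrableOn_abs_deriv_smul
      measurableSet_Ioi hderiv hinj g
  rw [himg] at hintIff
  have hIcov : IntegrableOn (fun t => |covf' t| • g (covf t)) (Ioi (0:ℝ)) :=
    hint2.congr_fun (fun t ht => (heq t ht).symm) measurableSet_Ioi
  have hI : IntegrableOn g (Ioo (0:ℝ) 1) := hintIff.mpr hIcov
  refine ⟨hI, ?_⟩
  have hval := integral_image_eq_integral_abs_deriv_smul measurableSet_Ioi hderiv hinj g
  rw [himg] at hval
  rw [hval, setIntegral_congr_fun measurableSet_Ioi heq, MeasureTheory.integral_const_mul,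
    sqrtInt (by linarith : (1:ℝ) ≤ 1 + s)]
  have hπ : (0:ℝ) < π := Real.pi_pos
  have hsq : (0:ℝ) < Real.sqrt (1+s) := Real.sqrt_pos.mpr (by linarith)
  field_simp
lemma wfnInt : IntegrableOn wfn (Ioo (0:ℝ) 1) := by
  have h := (arcInt le_rfl).1
  simpa using h

lemma wfnIntegral : ∫ a in Ioo (0:ℝ) 1, wfn a = 1 := by
  have h := (arcInt le_rfl).2
  simpa using h

lemma arcInt' {s : ℝ} (hs : 0 < s) :
    ∫ a in Ioo (0:ℝ) 1, wfn a * a * (1 + s*a)⁻¹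
      = s⁻¹ * (1 - (Real.sqrt (1+s))⁻¹) := by
  have heq : ∀ a ∈ Ioo (0:ℝ) 1, wfn a * a * (1 + s*a)⁻¹
      = s⁻¹ * (wfn a - wfn a * (1 + s*a)⁻¹) := by
    intro a ha
    obtain ⟨ha0, ha1⟩ := ha
    have h1 : (0:ℝ) < 1 + s*a := by positivity
    have hs' : s ≠ 0 := hs.ne'
    field_simp
    ring
  rw [setIntegral_congr_fun measurableSet_Ioo heq, MeasureTheory.integral_const_mul,
    integral_sub wfnInt (arcInt hs.le).1, wfnIntegral, (arcInt hs.le).2]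

lemma one_sub_exp_le {x : ℝ} (_ : 0 ≤ x) : 1 - Real.exp (-x) ≤ x := by
  nlinarith [Real.add_one_le_exp (-x)]

lemma frullani_meas (c l : ℝ) :
    Measurable (fun u : ℝ => (1 - Real.exp (-(l*u))) * u⁻¹ * Real.exp (-(c*u))) :=
  ((measurable_const.sub ((measurable_id.const_mul l).neg.exp)).mul
    measurable_id.inv).mul ((measurable_id.const_mul c).neg.exp)

lemma frullani_integrable {c l : ℝ} (hc : 0 < c) (hl : 0 ≤ l) :
    IntegrableOn (fun u => (1 - Real.exp (-(l*u))) * u⁻¹ * Real.exp (-(c*u)))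
      (Ioi (0:ℝ)) := by
  refine Integrable.mono ((exp_neg_integrableOn_Ioi 0 hc).const_mul l) ?_ ?_
  · exact (frullani_meas c l).aestronglyMeasurable
  · rw [ae_restrict_iff' measurableSet_Ioi]
    filter_upwards with u hu
    have hu' : (0:ℝ) < u := hu
    have h1 : 0 ≤ 1 - Real.exp (-(l*u)) := by
      simp only [sub_nonneg, Real.exp_le_one_iff]
      nlinarith
    have h2 : 1 - Real.exp (-(l*u)) ≤ l * u := one_sub_exp_le (by positivity)
    rw [Real.norm_eq_abs, Real.norm_eq_abs, abs_of_nonneg (by positivity),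
      abs_of_nonneg (by positivity)]
    calc (1 - Real.exp (-(l*u))) * u⁻¹ * Real.exp (-(c*u))
        ≤ (l * u) * u⁻¹ * Real.exp (-(c*u)) := by gcongr
      _ = l * Real.exp (-(c*u)) := by field_simp
      _ = l * Real.exp (-c*u) := by rw [neg_mul]

lemma frullani {c l : ℝ} (hc : 0 < c) (hl : 0 ≤ l) :
    ∫ u in Ioi (0:ℝ), (1 - Real.exp (-(l*u))) * u⁻¹ * Real.exp (-(c*u))
      = Real.log ((c + l)/c) := by
  rcases eq_or_lt_of_le hl with rfl | hl'
  · simp [div_self hc.ne']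
  have hinner : ∀ u ∈ Ioi (0:ℝ),
      (1 - Real.exp (-(l*u))) * u⁻¹ * Real.exp (-(c*u))
        = ∫ s in Ioc c (c+l), Real.exp (-(s*u)) := by
    intro u hu
    have hu' : (0:ℝ) < u := hu
    have hftc : ∫ s in c..(c+l), Real.exp (-(s*u))
        = -u⁻¹ * Real.exp (-((c+l)*u)) - (-u⁻¹ * Real.exp (-(c*u))) := by
      refine intervalIntegral.integral_eq_sub_of_hasDerivAt
          (f := fun s : ℝ => -u⁻¹ * Real.exp (-(s*u))) (fun s _ => ?_) ?_
      · have h1 : HasDerivAt (fun s : ℝ => -(s*u)) (-u) s := by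
          have := ((hasDerivAt_id' s).mul_const u).neg; rw [one_mul] at this; exact this
        have h2 : HasDerivAt (fun s : ℝ => -u⁻¹ * Real.exp (-(s*u)))
            (-u⁻¹ * (Real.exp (-(s*u)) * -u)) s :=
          HasDerivAt.const_mul (-u⁻¹) (HasDerivAt.exp h1)
        rw [show -u⁻¹ * (Real.exp (-(s*u)) * -u) = Real.exp (-(s*u)) by
          rw [mul_comm (Real.exp _) (-u), ← mul_assoc, neg_mul_neg, inv_mul_cancel₀ hu'.ne',
            one_mul]] at h2
        exact h2
      · apply Continuous.intervalIntegrable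
        continuity
    rw [← intervalIntegral.integral_of_le (by linarith : c ≤ c + l), hftc]
    have hsplit : Real.exp (-((c+l)*u)) = Real.exp (-(c*u)) * Real.exp (-(l*u)) := by
      rw [← Real.exp_add]; ring_nf
    rw [hsplit]; ring
  rw [setIntegral_congr_fun measurableSet_Ioi hinner]
  have hmeas : AEStronglyMeasurable
      (Function.uncurry fun (u s : ℝ) => Real.exp (-(s*u)))
      ((volume.restrict (Ioi (0:ℝ))).prod (volume.restrict (Ioc c (c+l)))) := by
    apply Continuous.aestronglyMeasurable
    apply Real.continuous_exp.comp
    exact (continuous_snd.mul continuous_fst).neg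
  have hInt : Integrable (Function.uncurry fun (u s : ℝ) => Real.exp (-(s*u)))
      ((volume.restrict (Ioi (0:ℝ))).prod (volume.restrict (Ioc c (c+l)))) := by
    rw [integrable_prod_iff hmeas]
    constructor
    · filter_upwards with u
      simp only [Function.uncurry_apply_pair]
      apply Continuous.integrableOn_Ioc
      continuity
    · simp only [Function.uncurry_apply_pair]
      have hbound : ∀ᵐ u ∂(volume.restrict (Ioi (0:ℝ))),
          ‖∫ s in Ioc c (c+l), ‖Real.exp (-(s*u))‖‖ ≤ ‖l * Real.exp (-c*u)‖ := by
        rw [ae_restrict_iff' measurableSet_Ioi]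
        filter_upwards with u hu
        have hu' : (0:ℝ) < u := hu
        rw [Real.norm_eq_abs, Real.norm_eq_abs, abs_of_nonneg]
        rotate_left
        · apply integral_nonneg; intro s; positivity
        rw [abs_of_nonneg (by positivity : (0:ℝ) ≤ l * Real.exp (-c*u))]
        have hb : ∀ s ∈ Ioc c (c+l), ‖Real.exp (-(s*u))‖ ≤ Real.exp (-(c*u)) := by
          intro s hs
          rw [Real.norm_eq_abs, abs_of_nonneg (Real.exp_pos _).le, Real.exp_le_exp]
          nlinarith [hs.1]
        calc ∫ s in Ioc c (c+l), ‖Real.exp (-(s*u))‖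
            ≤ ∫ _s in Ioc c (c+l), Real.exp (-(c*u)) := by
              apply setIntegral_mono_on ?_ ?_ measurableSet_Ioc hb
              · apply Continuous.integrableOn_Ioc
                apply Continuous.norm; continuity
              · exact integrableOn_const measure_Ioc_lt_top.ne
          _ = l * Real.exp (-(c*u)) := by
              rw [setIntegral_const, smul_eq_mul, Real.volume_real_Ioc_of_le (by linarith : c ≤ c + l)]
              ring_nf
          _ = l * Real.exp (-c*u) := by rw [neg_mul]
      refine Integrable.mono ((exp_neg_integrableOn_Ioi 0 hc).const_mul l) ?_ hbound
      exact AEStronglyMeasurable.integral_prod_right' (hmeas.norm)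
  have hswap := integral_integral_swap (f := fun (u s : ℝ) => Real.exp (-(s*u))) hInt
  rw [hswap]
  have hval : ∀ s ∈ Ioc c (c+l), ∫ u in Ioi (0:ℝ), Real.exp (-(s*u)) = s⁻¹ := by
    intro s hs
    exact expInt (lt_trans hc hs.1)
  rw [setIntegral_congr_fun measurableSet_Ioc hval,
    ← intervalIntegral.integral_of_le (by linarith : c ≤ c + l),
    integral_inv_of_pos hc (by linarith)]
lemma sqrt_bound {s : ℝ} (hs : 0 ≤ s) : Real.sqrt (1+s) ≤ 1 + s/2 := by
  have h := Real.sqrt_le_sqrt (by nlinarith : (1:ℝ) + s ≤ (1 + s/2)^2)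
  rwa [Real.sqrt_sq (by linarith)] at h

lemma gprime_bounds {s : ℝ} (hs : 0 < s) :
    0 ≤ s⁻¹ * (1 - (Real.sqrt (1+s))⁻¹) ∧ s⁻¹ * (1 - (Real.sqrt (1+s))⁻¹) ≤ 1/2 := by
  have hv1 : (1:ℝ) ≤ Real.sqrt (1+s) := by
    have h := Real.sqrt_le_sqrt (show (1:ℝ) ≤ 1+s by linarith)
    rwa [Real.sqrt_one] at h
  have hv0 : (0:ℝ) < Real.sqrt (1+s) := by linarith
  constructor
  · have : (Real.sqrt (1+s))⁻¹ ≤ 1 := by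
      rw [inv_le_one_iff₀]; right; exact hv1
    have h2 : 0 ≤ 1 - (Real.sqrt (1+s))⁻¹ := by linarith
    positivity
  · have hb : Real.sqrt (1+s) ≤ 1 + s/2 := sqrt_bound hs.le
    have h3 : 1 - (Real.sqrt (1+s))⁻¹ ≤ s/2 := by
      have : (Real.sqrt (1+s) - 1) / Real.sqrt (1+s) ≤ Real.sqrt (1+s) - 1 := by
        rw [div_le_iff₀ hv0]
        nlinarith
      have h4 : 1 - (Real.sqrt (1+s))⁻¹ = (Real.sqrt (1+s) - 1) / Real.sqrt (1+s) := by
        field_simp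
      rw [h4]
      nlinarith
    calc s⁻¹ * (1 - (Real.sqrt (1+s))⁻¹) ≤ s⁻¹ * (s/2) := by
          apply mul_le_mul_of_nonneg_left h3 (by positivity)
      _ = 1/2 := by field_simp
lemma gprimeInt {l : ℝ} (hl : 0 ≤ l) :
    ∫ s in (0:ℝ)..l, s⁻¹ * (1 - (Real.sqrt (1+s))⁻¹)
      = 2 * Real.log ((1 + Real.sqrt (1+l)) / 2) := by
  have hcont : ContinuousOn (fun s : ℝ => 2 * Real.log (1 + Real.sqrt (1+s))) (Icc 0 l) := by
    apply ContinuousOn.mul continuousOn_const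
    apply ContinuousOn.log
    · exact (continuousOn_const.add ((Real.continuous_sqrt.comp
        (continuous_const.add continuous_id)).continuousOn))
    · intro x hx
      have : (0:ℝ) ≤ Real.sqrt (1+x) := Real.sqrt_nonneg _
      linarith
  have hderiv : ∀ x ∈ Ioo 0 l, HasDerivWithinAt
      (fun s : ℝ => 2 * Real.log (1 + Real.sqrt (1+s)))
      (x⁻¹ * (1 - (Real.sqrt (1+x))⁻¹)) (Ioi x) x := by
    intro x hx
    have hx0 : (0:ℝ) < x := hx.1
    have h1x : (0:ℝ) < 1 + x := by linarith
    have hv0 : (0:ℝ) < Real.sqrt (1+x) := Real.sqrt_pos.mpr h1x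
    have hq : Real.sqrt (1+x) * Real.sqrt (1+x) = 1 + x := Real.mul_self_sqrt h1x.le
    have hs1 : HasDerivAt (fun s : ℝ => 1 + s) 1 x := by
      simpa using (hasDerivAt_id x).const_add 1
    have hs2 : HasDerivAt (fun s : ℝ => Real.sqrt (1+s))
        (1 / (2 * Real.sqrt (1+x)) * 1) x :=
      (Real.hasDerivAt_sqrt h1x.ne').comp x hs1
    have hs3 : HasDerivAt (fun s : ℝ => 1 + Real.sqrt (1+s))
        (1 / (2 * Real.sqrt (1+x)) * 1) x := hs2.const_add 1
    have hs4 : HasDerivAt (fun s : ℝ => 2 * Real.log (1 + Real.sqrt (1+s)))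
        (2 * (1 / (2 * Real.sqrt (1+x)) * 1 / (1 + Real.sqrt (1+x)))) x :=
      HasDerivAt.const_mul 2 (hs3.log (by linarith))
    have heq : 2 * (1 / (2 * Real.sqrt (1+x)) * 1 / (1 + Real.sqrt (1+x)))
        = x⁻¹ * (1 - (Real.sqrt (1+x))⁻¹) := by
      have hne : (1:ℝ) + Real.sqrt (1+x) ≠ 0 := by linarith
      field_simp
      nlinarith [hq]
    rw [← heq]
    exact hs4.hasDerivWithinAt
  have hint : IntervalIntegrable (fun s : ℝ => s⁻¹ * (1 - (Real.sqrt (1+s))⁻¹))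
      volume 0 l := by
    rw [intervalIntegrable_iff, uIoc_of_le hl]
    apply Measure.integrableOn_of_bounded (M := 1/2) measure_Ioc_lt_top.ne
    · apply Measurable.aestronglyMeasurable
      fun_prop
    · rw [ae_restrict_iff' measurableSet_Ioc]
      filter_upwards with s hs
      obtain ⟨h0, h2⟩ := gprime_bounds hs.1
      rw [Real.norm_eq_abs, abs_of_nonneg h0]
      exact h2
  have := intervalIntegral.integral_eq_sub_of_hasDeriv_right_of_le hl hcont hderiv hint
  rw [this]
  have h2 : Real.sqrt (1+(0:ℝ)) = 1 := by simp
  rw [h2]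
  have hpos : (0:ℝ) < 1 + Real.sqrt (1+l) := by
    have := Real.sqrt_nonneg (1+l); linarith
  rw [Real.log_div hpos.ne' two_ne_zero]
  norm_num
  ring
lemma logArcInt {l : ℝ} (hl : 0 ≤ l) :
    ∫ a in Ioo (0:ℝ) 1, wfn a * Real.log (1 + l*a)
      = 2 * Real.log ((1 + Real.sqrt (1+l)) / 2) := by
  rcases eq_or_lt_of_le hl with rfl | hl'
  · simp
  -- step 1: log (1+l*a) as an integral
  have hlog : ∀ a ∈ Ioo (0:ℝ) 1,
      Real.log (1 + l*a) = ∫ s in Ioc (0:ℝ) l, a * (1+s*a)⁻¹ := by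
    intro a ha
    obtain ⟨ha0, ha1⟩ := ha
    have hftc : ∫ s in (0:ℝ)..l, a * (1+s*a)⁻¹
        = Real.log (1 + l*a) - Real.log (1 + 0*a) := by
      refine intervalIntegral.integral_eq_sub_of_hasDerivAt
        (f := fun s : ℝ => Real.log (1 + s*a)) (fun s hs => ?_) ?_
      · rw [uIcc_of_le hl] at hs
        have hpos : (0:ℝ) < 1 + s*a := by nlinarith [hs.1]
        have h1 : HasDerivAt (fun s : ℝ => 1 + s*a) a s := by
          simpa using ((hasDerivAt_id s).mul_const a).const_add 1
        have h2 := h1.log hpos.ne'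
        rw [← div_eq_mul_inv]; exact h2
      · apply ContinuousOn.intervalIntegrable
        apply ContinuousOn.mul continuousOn_const
        apply ContinuousOn.inv₀
        · fun_prop
        · intro s hs
          rw [uIcc_of_le hl] at hs
          nlinarith [hs.1]
    rw [← intervalIntegral.integral_of_le hl, hftc]
    simp
  rw [setIntegral_congr_fun measurableSet_Ioo
    (fun a ha => by rw [hlog a ha] :
      ∀ a ∈ Ioo (0:ℝ) 1, wfn a * Real.log (1 + l*a)
        = wfn a * ∫ s in Ioc (0:ℝ) l, a * (1+s*a)⁻¹)]
  -- step 2: Fubini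
  have hmeas : AEStronglyMeasurable
      (Function.uncurry fun (a s : ℝ) => wfn a * (a * (1+s*a)⁻¹))
      ((volume.restrict (Ioo (0:ℝ) 1)).prod (volume.restrict (Ioc (0:ℝ) l))) := by
    apply Measurable.aestronglyMeasurable
    exact (wfn_meas.comp measurable_fst).mul (measurable_fst.mul
      ((measurable_const.add (measurable_snd.mul measurable_fst)).inv))
  have hsect : ∀ a ∈ Ioo (0:ℝ) 1,
      IntegrableOn (fun s => wfn a * (a * (1+s*a)⁻¹)) (Ioc (0:ℝ) l) := by
    intro a ha
    obtain ⟨ha0, ha1⟩ := ha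
    apply Integrable.const_mul
    apply Integrable.const_mul
    have hcont : ContinuousOn (fun s : ℝ => (1+s*a)⁻¹) (Icc (0:ℝ) l) := by
      apply ContinuousOn.inv₀
      · fun_prop
      · intro s hs
        nlinarith [hs.1]
    exact (hcont.integrableOn_Icc).mono_set Ioc_subset_Icc_self
  have hbnd : ∀ a ∈ Ioo (0:ℝ) 1, ∀ s ∈ Ioc (0:ℝ) l,
      ‖wfn a * (a * (1+s*a)⁻¹)‖ ≤ wfn a := by
    intro a ha s hs
    obtain ⟨ha0, ha1⟩ := ha
    have hpos : (0:ℝ) < 1 + s*a := by nlinarith [hs.1]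
    have hinv : (1+s*a)⁻¹ ≤ 1 := by
      rw [inv_le_one_iff₀]; right; nlinarith [hs.1]
    rw [Real.norm_eq_abs, abs_of_nonneg (mul_nonneg (wfn_nonneg a) (by positivity))]
    calc wfn a * (a * (1+s*a)⁻¹) ≤ wfn a * (1 * 1) := by
          apply mul_le_mul_of_nonneg_left _ (wfn_nonneg a)
          apply mul_le_mul ha1.le hinv (by positivity) (by norm_num)
      _ = wfn a := by ring
  have hInt : Integrable (Function.uncurry fun (a s : ℝ) => wfn a * (a * (1+s*a)⁻¹))
      ((volume.restrict (Ioo (0:ℝ) 1)).prod (volume.restrict (Ioc (0:ℝ) l))) := by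
    rw [integrable_prod_iff hmeas]
    constructor
    · rw [ae_restrict_iff' measurableSet_Ioo]
      filter_upwards with a ha
      exact hsect a ha
    · simp only [Function.uncurry_apply_pair]
      have hb2 : ∀ᵐ a ∂(volume.restrict (Ioo (0:ℝ) 1)),
          ‖∫ s in Ioc (0:ℝ) l, ‖wfn a * (a * (1+s*a)⁻¹)‖‖ ≤ ‖l * wfn a‖ := by
        rw [ae_restrict_iff' measurableSet_Ioo]
        filter_upwards with a ha
        rw [Real.norm_eq_abs (l * wfn a),
          abs_of_nonneg (mul_nonneg hl (wfn_nonneg a)),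
          Real.norm_eq_abs, abs_of_nonneg (by
            apply integral_nonneg; exact fun s => norm_nonneg _)]
        calc ∫ s in Ioc (0:ℝ) l, ‖wfn a * (a * (1+s*a)⁻¹)‖
            ≤ ∫ _s in Ioc (0:ℝ) l, wfn a := by
              apply setIntegral_mono_on ((hsect a ha).norm) _ measurableSet_Ioc
                (hbnd a ha)
              exact integrableOn_const measure_Ioc_lt_top.ne
          _ = l * wfn a := by
              rw [setIntegral_const, smul_eq_mul, Real.volume_real_Ioc_of_le hl]
              ring_nf
      refine Integrable.mono (wfnInt.const_mul l) ?_ hb2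
      exact AEStronglyMeasurable.integral_prod_right' (hmeas.norm)
  have hswap := integral_integral_swap
    (f := fun (a s : ℝ) => wfn a * (a * (1+s*a)⁻¹)) hInt
  have hpull : ∀ a ∈ Ioo (0:ℝ) 1,
      wfn a * ∫ s in Ioc (0:ℝ) l, a * (1+s*a)⁻¹
        = ∫ s in Ioc (0:ℝ) l, wfn a * (a * (1+s*a)⁻¹) := by
    intro a _
    exact (MeasureTheory.integral_const_mul _ _).symm
  rw [setIntegral_congr_fun measurableSet_Ioo hpull, hswap]
  have hval : ∀ s ∈ Ioc (0:ℝ) l,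
      ∫ a in Ioo (0:ℝ) 1, wfn a * (a * (1+s*a)⁻¹)
        = s⁻¹ * (1 - (Real.sqrt (1+s))⁻¹) := by
    intro s hs
    rw [← arcInt' hs.1]
    apply setIntegral_congr_fun measurableSet_Ioo
    intro a _
    ring
  rw [setIntegral_congr_fun measurableSet_Ioc hval,
    ← intervalIntegral.integral_of_le hl, gprimeInt hl]

/-- Lévy–Khintchine representation
`log((1+√(1+λ))/2) = (1/2)∫₀^∞ (1-e^{-λu}) u⁻¹ n(u) du`, where
`n(u) = ∫₀¹ e^{-u/a} (π √(a(1-a)))⁻¹ da` is the Laplace transform of `1/G`,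
`G` arcsine distributed. -/
theorem stmt_5 (l : ℝ) (hl : 0 ≤ l) :
    Real.log ((1 + Real.sqrt (1 + l)) / 2) =
      (1/2) * ∫ u in Set.Ioi (0:ℝ),
        (1 - Real.exp (-l * u)) * u⁻¹ *
          (∫ a in Set.Ioo (0:ℝ) 1,
            Real.exp (-u / a) * (π⁻¹ * (a * (1 - a)) ^ (-(1/2 : ℝ)))) := by
  have hC : ∀ u ∈ Ioi (0:ℝ),
      0 ≤ (1 - Real.exp (-(l*u))) * u⁻¹ ∧ (1 - Real.exp (-(l*u))) * u⁻¹ ≤ l := by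
    intro u hu
    have hu' : (0:ℝ) < u := hu
    have h1 : 0 ≤ 1 - Real.exp (-(l*u)) := by
      simp only [sub_nonneg, Real.exp_le_one_iff]
      nlinarith
    have h2 : 1 - Real.exp (-(l*u)) ≤ l * u := one_sub_exp_le (by positivity)
    constructor
    · positivity
    · calc (1 - Real.exp (-(l*u))) * u⁻¹ ≤ (l*u) * u⁻¹ := by gcongr
        _ = l := by field_simp
  have hout : ∀ u ∈ Ioi (0:ℝ),
      (1 - Real.exp (-l * u)) * u⁻¹ *
          (∫ a in Ioo (0:ℝ) 1,
            Real.exp (-u / a) * (π⁻¹ * (a * (1 - a)) ^ (-(1/2 : ℝ))))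
        = ∫ a in Ioo (0:ℝ) 1,
            (1 - Real.exp (-(l*u))) * u⁻¹ * Real.exp (-(a⁻¹*u)) * wfn a := by
    intro u _
    rw [show (-l * u) = -(l*u) by ring, ← MeasureTheory.integral_const_mul]
    apply setIntegral_congr_fun measurableSet_Ioo
    intro a _
    simp only [wfn]
    rw [show -u/a = -(a⁻¹*u) by ring]
    ring
  have hmeas : AEStronglyMeasurable
      (Function.uncurry fun (u a : ℝ) =>
        (1 - Real.exp (-(l*u))) * u⁻¹ * Real.exp (-(a⁻¹*u)) * wfn a)
      ((volume.restrict (Ioi (0:ℝ))).prod (volume.restrict (Ioo (0:ℝ) 1))) := by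
    apply Measurable.aestronglyMeasurable
    exact (((measurable_const.sub ((measurable_fst.const_mul l).neg.exp)).mul
      measurable_fst.inv).mul ((measurable_snd.inv.mul measurable_fst).neg.exp)).mul
      (wfn_meas.comp measurable_snd)
  have hptbnd : ∀ u ∈ Ioi (0:ℝ), ∀ a ∈ Ioo (0:ℝ) 1,
      ‖(1 - Real.exp (-(l*u))) * u⁻¹ * Real.exp (-(a⁻¹*u)) * wfn a‖
        ≤ (l * Real.exp (-u)) * wfn a := by
    intro u hu a ha
    have hu' : (0:ℝ) < u := hu
    obtain ⟨hc0, hcl⟩ := hC u hu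
    have hw := wfn_nonneg a
    have ha0 : (0:ℝ) < a := ha.1
    have hinv1 : (1:ℝ) ≤ a⁻¹ := by
      rw [le_inv_comm₀ one_pos ha0]
      simpa using ha.2.le
    have hexp : Real.exp (-(a⁻¹*u)) ≤ Real.exp (-u) := by
      rw [Real.exp_le_exp]
      nlinarith
    rw [Real.norm_eq_abs,
      abs_of_nonneg (mul_nonneg (mul_nonneg hc0 (Real.exp_pos _).le) hw)]
    calc (1 - Real.exp (-(l*u))) * u⁻¹ * Real.exp (-(a⁻¹*u)) * wfn a
        ≤ l * Real.exp (-u) * wfn a := by gcongr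
      _ = (l * Real.exp (-u)) * wfn a := by ring
  have hsect : ∀ u ∈ Ioi (0:ℝ),
      IntegrableOn (fun a =>
        (1 - Real.exp (-(l*u))) * u⁻¹ * Real.exp (-(a⁻¹*u)) * wfn a)
        (Ioo (0:ℝ) 1) := by
    intro u hu
    refine Integrable.mono (wfnInt.const_mul (l * Real.exp (-u))) ?_ ?_
    · exact (((measurable_const.mul
        ((measurable_id.inv.mul measurable_const).neg.exp)).mul
          wfn_meas).aestronglyMeasurable)
    · rw [ae_restrict_iff' measurableSet_Ioo]
      filter_upwards with a ha
      refine le_trans (hptbnd u hu a ha) ?_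
      rw [Real.norm_eq_abs,
        abs_of_nonneg (mul_nonneg (by positivity) (wfn_nonneg a))]
  have hInt : Integrable
      (Function.uncurry fun (u a : ℝ) =>
        (1 - Real.exp (-(l*u))) * u⁻¹ * Real.exp (-(a⁻¹*u)) * wfn a)
      ((volume.restrict (Ioi (0:ℝ))).prod (volume.restrict (Ioo (0:ℝ) 1))) := by
    rw [integrable_prod_iff hmeas]
    constructor
    · rw [ae_restrict_iff' measurableSet_Ioi]
      filter_upwards with u hu
      exact hsect u hu
    · simp only [Function.uncurry_apply_pair]
      have hb2 : ∀ᵐ u ∂(volume.restrict (Ioi (0:ℝ))),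
          ‖∫ a in Ioo (0:ℝ) 1,
              ‖(1 - Real.exp (-(l*u))) * u⁻¹ * Real.exp (-(a⁻¹*u)) * wfn a‖‖
            ≤ ‖l * Real.exp (-1*u)‖ := by
        rw [ae_restrict_iff' measurableSet_Ioi]
        filter_upwards with u hu
        have hu' : (0:ℝ) < u := hu
        rw [Real.norm_eq_abs, Real.norm_eq_abs,
          abs_of_nonneg (integral_nonneg (fun a => norm_nonneg _)),
          abs_of_nonneg (by positivity : (0:ℝ) ≤ l * Real.exp (-1*u))]
        calc ∫ a in Ioo (0:ℝ) 1,
              ‖(1 - Real.exp (-(l*u))) * u⁻¹ * Real.exp (-(a⁻¹*u)) * wfn a‖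
            ≤ ∫ a in Ioo (0:ℝ) 1, (l * Real.exp (-u)) * wfn a := by
              apply setIntegral_mono_on ((hsect u hu).norm)
                (wfnInt.const_mul _) measurableSet_Ioo (hptbnd u hu)
          _ = (l * Real.exp (-u)) * ∫ a in Ioo (0:ℝ) 1, wfn a :=
              MeasureTheory.integral_const_mul _ _
          _ = l * Real.exp (-1*u) := by rw [wfnIntegral]; ring_nf
      refine Integrable.mono ((exp_neg_integrableOn_Ioi 0 one_pos).const_mul l) ?_ hb2
      exact AEStronglyMeasurable.integral_prod_right' (hmeas.norm)
  have hswap := integral_integral_swap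
    (f := fun (u a : ℝ) =>
      (1 - Real.exp (-(l*u))) * u⁻¹ * Real.exp (-(a⁻¹*u)) * wfn a) hInt
  have hinner : ∀ a ∈ Ioo (0:ℝ) 1,
      (∫ u in Ioi (0:ℝ),
        (1 - Real.exp (-(l*u))) * u⁻¹ * Real.exp (-(a⁻¹*u)) * wfn a)
        = wfn a * Real.log (1 + l*a) := by
    intro a ha
    have ha0 : (0:ℝ) < a := ha.1
    rw [MeasureTheory.integral_mul_const, frullani (inv_pos.mpr ha0) hl]
    rw [show (a⁻¹ + l)/a⁻¹ = 1 + l*a by field_simp]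
    ring
  have key : (∫ u in Ioi (0:ℝ),
      (1 - Real.exp (-l * u)) * u⁻¹ *
        (∫ a in Ioo (0:ℝ) 1,
          Real.exp (-u / a) * (π⁻¹ * (a * (1 - a)) ^ (-(1/2 : ℝ)))))
      = 2 * Real.log ((1 + Real.sqrt (1 + l)) / 2) := by
    rw [setIntegral_congr_fun measurableSet_Ioi hout, hswap,
      setIntegral_congr_fun measurableSet_Ioo hinner, logArcInt hl]
  rw [key]
  ring
end

section
/- More generally, let 0 < α < 1, N ≥ 1, ν_1,…,ν_N > 0 with Σ_{i=1}^N ν_i^α = 1, and let T^{(ν_i)}_α be independent subordinators with Laplace exponents λ ↦ (ν_i+λ)^α − ν_i^α. Let γ_t ~ Gamma(t,1) be independent of all of them. Then Σ_{i=1}^N ν_i T^{(ν_i)}_α(γ_t) is Gamma(αt,1)-distributed, i.e. for all λ ≥ 0, E[exp(−λ Σ_i ν_i T^{(ν_i)}_α(γ_t))] = (1+λ)^{-αt}. Equivalently: (1/Γ(t)) ∫₀^∞ u^{t-1} e^{-u} exp(−u Σ_i ((ν_i + λν_i)^α − ν_i^α)) du = (1+λ)^{-αt}. -/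
open MeasureTheory

/-! Since `ν i + l * ν i = (1 + l) * ν i` and `∑ i, ν i ^ α = 1`, the exponent collapses to
`(1 + l) ^ α - 1`, which no longer depends on `ν`. The integral is then the Laplace transform of a
`Gamma(t, 1)` density at `(1 + l) ^ α - 1`, namely `((1 + l) ^ α) ^ (-t) = (1 + l) ^ (-(α * t))`. -/

theorem Real.sum_rpow_mul_sub_rpow {ι : Type*} (s : Finset ι) (ν : ι → ℝ) {c α : ℝ} (hc : 0 ≤ c)
    (hν : ∀ i ∈ s, 0 ≤ ν i) (hsum : ∑ i ∈ s, ν i ^ α = 1) :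
    ∑ i ∈ s, ((c * ν i) ^ α - ν i ^ α) = c ^ α - 1 := by
  rw [Finset.sum_sub_distrib, hsum,
    Finset.sum_congr rfl fun i hi ↦ Real.mul_rpow hc (hν i hi), ← Finset.mul_sum, hsum, mul_one]

theorem Real.gamma_laplace_transform {t s : ℝ} (ht : 0 < t) (hs : 0 < 1 + s) :
    (1 / Real.Gamma t) * ∫ u in Set.Ioi (0 : ℝ), u ^ (t - 1) * Real.exp (-u) * Real.exp (-u * s)
      = (1 + s) ^ (-t) := by
  have hexp : ∀ u : ℝ, Real.exp (-u) * Real.exp (-u * s) = Real.exp (-((1 + s) * u)) := fun u ↦ by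
    rw [← Real.exp_add]; ring_nf
  simp_rw [mul_assoc, hexp, Real.integral_rpow_mul_exp_neg_mul_Ioi ht hs, one_div,
    Real.inv_rpow hs.le, ← Real.rpow_neg hs.le]
  field_simp [(Real.Gamma_pos_of_pos ht).ne']

theorem stmt_8_general (α t l : ℝ) (ht : 0 < t) (hl : 0 ≤ l)
    (N : ℕ) (ν : Fin N → ℝ) (hν : ∀ i, 0 < ν i)
    (hsum : ∑ i, (ν i) ^ α = 1) :
    (1 / Real.Gamma t) *
      ∫ u in Set.Ioi (0:ℝ),
        u ^ (t - 1) * Real.exp (-u) *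
          Real.exp (-u * ∑ i, ((ν i + l * ν i) ^ α - (ν i) ^ α))
      = (1 + l) ^ (-(α * t)) := by
  have h1l : 0 < 1 + l := by linarith
  have hexponent : ∑ i, ((ν i + l * ν i) ^ α - ν i ^ α) = (1 + l) ^ α - 1 := by
    simp_rw [← one_add_mul]
    exact Real.sum_rpow_mul_sub_rpow _ ν h1l.le (fun i _ ↦ (hν i).le) hsum
  rw [hexponent, Real.gamma_laplace_transform ht (by simpa using Real.rpow_pos_of_pos h1l α),
    add_sub_cancel, ← Real.rpow_mul h1l.le, mul_neg]

/-- for independent Esscher transformed stable(α) subordinators with parameters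
`ν_i`, `Σ ν_i^α = 1`, the variable `Σ_i ν_i T^{(ν_i)}_α(γ_t)` is `Gamma(αt,1)` distributed;
stated as the equivalent integral identity. -/
theorem stmt_8 (α t l : ℝ) (hα : 0 < α) (hα1 : α < 1) (ht : 0 < t) (hl : 0 ≤ l)
    (N : ℕ) (hN : 1 ≤ N) (ν : Fin N → ℝ) (hν : ∀ i, 0 < ν i)
    (hsum : ∑ i, (ν i) ^ α = 1) :
    (1 / Real.Gamma t) *
      ∫ u in Set.Ioi (0:ℝ),
        u ^ (t - 1) * Real.exp (-u) *
          Real.exp (-u * ∑ i, ((ν i + l * ν i) ^ α - (ν i) ^ α))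
      = (1 + l) ^ (-(α * t)) :=
  stmt_8_general α t l ht hl N ν hν hsum
end

section
/- Let 0 < α < 1, ν_1,…,ν_N > 0 with Σ ν_i^α = 1, μ_1,…,μ_N ≥ 0, and let T^{(1)}_α,…,T^{(N)}_α be i.i.d. standard positive α-stable random variables. Then for every λ ≥ 0 and t > 0, the Laplace transform of the generalized positive Linnik variable satisfies E[exp(−λ Σ_i μ_i T^{(ν_i)}_α(γ_t))] = exp( −αt ∫₀^∞ (1−e^{-λ x}) x^{-1} E[ exp(−x (ν·T_α)/(μ·T_α)) ] dx ), i.e. the process t ↦ Σ_i μ_i T^{(ν_i)}_α(γ_t) is a driftless subordinator with Lévy density α x^{-1} E[exp(−x (ν·T_α)/(μ·T_α))], where ν·T_α = Σ_j ν_j T^{(j)}_α and μ·T_α = Σ_j μ_j T^{(j)}_α (assumed positive a.s.). -/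
open MeasureTheory Set


lemma frullani_nonneg {a b : ℝ} (hab : a ≤ b) {x : ℝ} (hx : 0 < x) :
    0 ≤ (Real.exp (-(a*x)) - Real.exp (-(b*x))) / x :=
  div_nonneg (sub_nonneg.mpr (Real.exp_le_exp.mpr (by nlinarith))) hx.le

lemma frullani_bound {a b : ℝ} (hab : a ≤ b) {x : ℝ} (hx : 0 < x) :
    (Real.exp (-(a*x)) - Real.exp (-(b*x))) / x ≤ (b - a) * Real.exp (-(a*x)) := by
  rw [div_le_iff₀ hx]
  have h1 : Real.exp (-(b*x)) = Real.exp (-(a*x)) * Real.exp (-((b-a)*x)) := by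
    rw [← Real.exp_add]; ring_nf
  have h2 : 1 - Real.exp (-((b-a)*x)) ≤ (b-a)*x := by
    have := Real.add_one_le_exp (-((b-a)*x))
    nlinarith [Real.exp_pos (-((b-a)*x))]
  nlinarith [Real.exp_pos (-(a*x)), Real.exp_pos (-((b-a)*x)), mul_nonneg (mul_nonneg (sub_nonneg.mpr hab) hx.le) (Real.exp_pos (-(a*x))).le]

lemma frullani_integrableOn {a b : ℝ} (ha : 0 < a) (hab : a ≤ b) :
    IntegrableOn (fun x => (Real.exp (-(a*x)) - Real.exp (-(b*x))) / x) (Set.Ioi (0:ℝ)) := by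
  apply Integrable.mono' ((exp_neg_integrableOn_Ioi 0 ha).const_mul (b-a))
  · apply Measurable.aestronglyMeasurable
    exact ((measurable_id.const_mul a).neg.exp.sub (measurable_id.const_mul b).neg.exp).div measurable_id
  · rw [ae_restrict_iff' measurableSet_Ioi]
    filter_upwards with x hx
    rw [Real.norm_eq_abs, abs_of_nonneg (frullani_nonneg hab hx)]
    have := frullani_bound hab hx
    calc (Real.exp (-(a*x)) - Real.exp (-(b*x))) / x ≤ (b-a) * Real.exp (-(a*x)) := this
    _ = (b-a) * Real.exp (-a*x) := by ring_nf

lemma frullani_exp {a b : ℝ} (ha : 0 < a) (hab : a ≤ b) :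
    ∫ x in Set.Ioi (0:ℝ), (Real.exp (-(a*x)) - Real.exp (-(b*x))) / x
      = Real.log b - Real.log a := by
  have hb : 0 < b := lt_of_lt_of_le ha hab
  have key : ∀ x ∈ Set.Ioi (0:ℝ),
      (Real.exp (-(a*x)) - Real.exp (-(b*x))) / x
        = ∫ s in Set.Ioc a b, Real.exp (-(x*s)) := by
    intro x hx
    have hx0 : (0:ℝ) < x := hx
    rw [← _root_.intervalIntegral.integral_of_le hab]
    have h1 : ∀ s : ℝ, Real.exp (-(x*s)) = Real.exp ((-x) * s) := fun s => by ring_nf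
    simp_rw [h1]
    rw [_root_.intervalIntegral.integral_comp_mul_left Real.exp (neg_ne_zero.mpr hx0.ne')]
    open intervalIntegral in rw [integral_exp]
    rw [smul_eq_mul]
    have e1 : -x * b = -(b*x) := by ring
    have e2 : -x * a = -(a*x) := by ring
    rw [e1, e2]
    field_simp [hx0.ne']
    ring
  rw [MeasureTheory.setIntegral_congr_fun measurableSet_Ioi key]
  have hmeas : AEStronglyMeasurable (Function.uncurry fun x s => Real.exp (-(x*s)))
      ((volume.restrict (Set.Ioi (0:ℝ))).prod (volume.restrict (Set.Ioc a b))) := by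
    apply Continuous.aestronglyMeasurable
    exact Real.continuous_exp.comp (continuous_fst.mul continuous_snd).neg
  have hint : Integrable (Function.uncurry fun x s => Real.exp (-(x*s)))
      ((volume.restrict (Set.Ioi (0:ℝ))).prod (volume.restrict (Set.Ioc a b))) := by
    rw [MeasureTheory.integrable_prod_iff hmeas]
    constructor
    · filter_upwards with x
      exact (Real.continuous_exp.comp ((continuous_const.mul continuous_id).neg)).integrableOn_Ioc
    · apply Integrable.mono' ((exp_neg_integrableOn_Ioi 0 ha).const_mul (b-a))
      · exact hmeas.norm.integral_prod_right'
      · rw [ae_restrict_iff' measurableSet_Ioi]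
        filter_upwards with x hx
        have hbd : ‖∫ s in Set.Ioc a b, ‖Real.exp (-(x*s))‖‖ ≤ Real.exp (-(x*a)) * (volume (Set.Ioc a b)).toReal := by
          refine (fun hC hs => norm_setIntegral_le_of_norm_le_const hs hC) ?_ ?_
          · intro s hs
            rw [norm_norm, Real.norm_eq_abs, abs_of_pos (Real.exp_pos _)]
            exact Real.exp_le_exp.mpr (by nlinarith [hs.1, le_of_lt (mem_Ioi.mp hx)])
          · rw [Real.volume_Ioc]; exact ENNReal.ofReal_lt_top
        calc ‖∫ s in Set.Ioc a b, ‖Real.exp (-(x*s))‖‖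
            ≤ Real.exp (-(x*a)) * (volume (Set.Ioc a b)).toReal := hbd
          _ = (b-a) * Real.exp (-a*x) := by
              rw [Real.volume_Ioc, ENNReal.toReal_ofReal (by linarith)]; ring_nf
  rw [MeasureTheory.integral_integral_swap hint]
  have inner2 : ∀ s ∈ Set.Ioc a b, (∫ x in Set.Ioi (0:ℝ), Real.exp (-(x*s))) = s⁻¹ := by
    intro s hs
    have hs0 : 0 < s := lt_of_lt_of_le ha hs.1.le
    have h2 : ∀ x : ℝ, -(x*s) = -(s*x) := fun x => by ring
    simp_rw [h2]
    have := MeasureTheory.integral_comp_mul_left_Ioi (fun u => Real.exp (-u)) 0 hs0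
    simp only [mul_zero] at this
    rw [this, integral_exp_neg_Ioi_zero, smul_eq_mul, mul_one]
  rw [MeasureTheory.setIntegral_congr_fun measurableSet_Ioc inner2]
  rw [← _root_.intervalIntegral.integral_of_le hab]
  rw [integral_inv (by rw [Set.uIcc_of_le hab]; exact fun h => absurd h.1 (not_le.mpr ha))]
  exact Real.log_div hb.ne' ha.ne'

lemma xint_eqOn (R l : ℝ) (hR : 0 < R) (hl : 0 ≤ l) :
    Set.EqOn (fun x => (Real.exp (-(R*x)) - Real.exp (-((R+l)*x))) / x)
      (fun x => (1 - Real.exp (-l * x)) * x⁻¹ * Real.exp (-x * R)) (Set.Ioi 0) := by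
  intro x hx
  have hx0 : (0:ℝ) < x := hx
  simp only []
  rw [show -((R+l)*x) = -(R*x) + -(l*x) by ring, Real.exp_add,
    show -l * x = -(l*x) by ring, show -x * R = -(R*x) by ring]
  field_simp

lemma xint_integrable (R l : ℝ) (hR : 0 < R) (hl : 0 ≤ l) :
    IntegrableOn (fun x => (1 - Real.exp (-l * x)) * x⁻¹ * Real.exp (-x * R)) (Set.Ioi (0:ℝ)) := by
  exact (frullani_integrableOn hR (le_add_of_nonneg_right hl)).congr
    ((ae_restrict_iff' measurableSet_Ioi).mpr (ae_of_all _ fun x hx => xint_eqOn R l hR hl hx))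

lemma xint_value (R l : ℝ) (hR : 0 < R) (hl : 0 ≤ l) :
    ∫ x in Set.Ioi (0:ℝ), (1 - Real.exp (-l * x)) * x⁻¹ * Real.exp (-x * R)
      = Real.log (R + l) - Real.log R := by
  rw [← MeasureTheory.setIntegral_congr_fun measurableSet_Ioi (xint_eqOn R l hR hl)]
  exact frullani_exp hR (le_add_of_nonneg_right hl)

lemma linnik_key {Ω : Type*} [MeasurableSpace Ω] (μM : Measure Ω) [IsProbabilityMeasure μM]
    (α l S : ℝ) (hα : 0 < α) (hl : 0 ≤ l) (hS0 : 0 ≤ S)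
    (A B : Ω → ℝ) (hAm : Measurable A) (hBm : Measurable B)
    (hApos : ∀ ω, 0 < A ω) (hBpos : ∀ ω, 0 < B ω)
    (hlawA : ∀ y : ℝ, 0 < y → ∫ ω, Real.exp (-(A ω * y)) ∂μM = Real.exp (-(y^α)))
    (hlawAB : ∀ y : ℝ, 0 < y →
      ∫ ω, Real.exp (-((A ω + l * B ω) * y)) ∂μM = Real.exp (-((1+S) * y^α))) :
    (∫ x in Set.Ioi (0:ℝ), (1 - Real.exp (-l * x)) * x⁻¹ * ∫ ω, Real.exp (-x * A ω / B ω) ∂μM)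
      = Real.log (1+S) / α := by
  simp only [mul_div_assoc]
  have hRpos : ∀ ω, 0 < A ω / B ω := fun ω => div_pos (hApos ω) (hBpos ω)
  have hABpos : ∀ ω, 0 < A ω + l * B ω :=
    fun ω => by nlinarith [hApos ω, mul_nonneg hl (hBpos ω).le]
  have hle : ∀ ω, A ω ≤ A ω + l * B ω :=
    fun ω => le_add_of_nonneg_right (mul_nonneg hl (hBpos ω).le)
  have h1S : (0:ℝ) < 1 + S := by linarith
  have hone : (1:ℝ) ≤ 1 + S := by linarith
  -- measurability
  have hFm : Measurable (fun p : ℝ × Ω =>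
      (1 - Real.exp (-l * p.1)) * p.1⁻¹ * Real.exp (-p.1 * (A p.2 / B p.2))) := by
    have m1 : Measurable (fun p : ℝ × Ω => -p.1 * (A p.2 / B p.2)) :=
      measurable_fst.neg.mul ((hAm.comp measurable_snd).div (hBm.comp measurable_snd))
    exact ((measurable_const.sub ((measurable_fst.const_mul (-l)).exp)).mul
      measurable_fst.inv).mul m1.exp
  have hGm : Measurable (fun p : Ω × ℝ =>
      (Real.exp (-(A p.1 * p.2)) - Real.exp (-((A p.1 + l * B p.1) * p.2))) / p.2) :=
    ((((hAm.comp measurable_fst).mul measurable_snd).neg.exp).sub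
      ((((hAm.comp measurable_fst).add ((hBm.comp measurable_fst).const_mul l)).mul
        measurable_snd).neg.exp)).div measurable_snd
  -- basic positivity of the integrand pieces
  have hcx : ∀ x : ℝ, 0 < x → 0 ≤ (1 - Real.exp (-l * x)) * x⁻¹ := by
    intro x hx
    apply mul_nonneg _ (inv_nonneg.mpr hx.le)
    have : Real.exp (-l * x) ≤ 1 := Real.exp_le_one_iff.mpr (by nlinarith)
    linarith
  have hFnn : ∀ x : ℝ, 0 < x → ∀ ω, 0 ≤ (1 - Real.exp (-l * x)) * x⁻¹ * Real.exp (-x * (A ω / B ω)) :=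
    fun x hx ω => mul_nonneg (hcx x hx) (Real.exp_pos _).le
  have hFle : ∀ x : ℝ, 0 < x → ∀ ω,
      (1 - Real.exp (-l * x)) * x⁻¹ * Real.exp (-x * (A ω / B ω)) ≤ (1 - Real.exp (-l * x)) * x⁻¹ := by
    intro x hx ω
    have h1 : Real.exp (-x * (A ω / B ω)) ≤ 1 :=
      Real.exp_le_one_iff.mpr (by nlinarith [hRpos ω])
    nlinarith [hcx x hx]
  -- step 1 : convert to double lintegral
  have hgm : Measurable (fun x => ∫⁻ ω,
      ENNReal.ofReal ((1 - Real.exp (-l * x)) * x⁻¹ * Real.exp (-x * (A ω / B ω))) ∂μM) :=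
    (ENNReal.measurable_ofReal.comp hFm).lintegral_prod_right'
  have hfin : ∀ᵐ x ∂(volume.restrict (Set.Ioi (0:ℝ))), (∫⁻ ω,
      ENNReal.ofReal ((1 - Real.exp (-l * x)) * x⁻¹ * Real.exp (-x * (A ω / B ω))) ∂μM) < ⊤ := by
    rw [ae_restrict_iff' measurableSet_Ioi]
    filter_upwards with x hx
    calc (∫⁻ ω, ENNReal.ofReal ((1 - Real.exp (-l * x)) * x⁻¹ * Real.exp (-x * (A ω / B ω))) ∂μM)
        ≤ ∫⁻ _, ENNReal.ofReal ((1 - Real.exp (-l * x)) * x⁻¹) ∂μM :=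
          lintegral_mono fun ω => ENNReal.ofReal_le_ofReal (hFle x hx ω)
      _ = ENNReal.ofReal ((1 - Real.exp (-l * x)) * x⁻¹) := by
          rw [lintegral_const, measure_univ, mul_one]
      _ < ⊤ := ENNReal.ofReal_lt_top
  have step1 : (∫ x in Set.Ioi (0:ℝ), (1 - Real.exp (-l * x)) * x⁻¹ *
        ∫ ω, Real.exp (-x * (A ω / B ω)) ∂μM)
      = (∫⁻ x in Set.Ioi (0:ℝ), ∫⁻ ω,
          ENNReal.ofReal ((1 - Real.exp (-l * x)) * x⁻¹ * Real.exp (-x * (A ω / B ω))) ∂μM).toReal := by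
    rw [← MeasureTheory.integral_toReal hgm.aemeasurable hfin]
    apply MeasureTheory.setIntegral_congr_fun measurableSet_Ioi
    intro x hx
    dsimp only
    have hx0 : (0:ℝ) < x := hx
    have hint : Integrable (fun ω =>
        (1 - Real.exp (-l * x)) * x⁻¹ * Real.exp (-x * (A ω / B ω))) μM := by
      apply Integrable.mono' (integrable_const ((1 - Real.exp (-l * x)) * x⁻¹))
      · exact (hFm.comp (measurable_const.prodMk measurable_id)).aestronglyMeasurable
      · filter_upwards with ω
        rw [Real.norm_eq_abs, abs_of_nonneg (hFnn x hx0 ω)]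
        exact hFle x hx0 ω
    rw [← ofReal_integral_eq_lintegral_ofReal hint (ae_of_all _ fun ω => hFnn x hx0 ω),
      ENNReal.toReal_ofReal (integral_nonneg fun ω => hFnn x hx0 ω),
      MeasureTheory.integral_const_mul]
  rw [step1]
  -- step 2 : Tonelli
  have hsw1 : AEMeasurable (Function.uncurry fun (x:ℝ) (ω:Ω) =>
      ENNReal.ofReal ((1 - Real.exp (-l * x)) * x⁻¹ * Real.exp (-x * (A ω / B ω))))
      ((volume.restrict (Set.Ioi (0:ℝ))).prod μM) :=
    (ENNReal.measurable_ofReal.comp hFm).aemeasurable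
  rw [lintegral_lintegral_swap hsw1]
  -- step 3/4 : per-ω Frullani both ways
  have step34 : ∀ ω, (∫⁻ x in Set.Ioi (0:ℝ),
      ENNReal.ofReal ((1 - Real.exp (-l * x)) * x⁻¹ * Real.exp (-x * (A ω / B ω))))
      = ∫⁻ y in Set.Ioi (0:ℝ),
        ENNReal.ofReal ((Real.exp (-(A ω * y)) - Real.exp (-((A ω + l * B ω) * y))) / y) := by
    intro ω
    rw [← ofReal_integral_eq_lintegral_ofReal (xint_integrable _ l (hRpos ω) hl)
      ((ae_restrict_iff' measurableSet_Ioi).mpr (ae_of_all _ fun x hx => hFnn x hx ω)),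
      ← ofReal_integral_eq_lintegral_ofReal (frullani_integrableOn (hApos ω) (hle ω))
      ((ae_restrict_iff' measurableSet_Ioi).mpr (ae_of_all _ fun y hy => frullani_nonneg (hle ω) hy)),
      xint_value _ l (hRpos ω) hl, frullani_exp (hApos ω) (hle ω)]
    congr 1
    have e : A ω / B ω + l = (A ω + l * B ω) / B ω := by
      rw [add_div, mul_div_assoc, div_self (hBpos ω).ne', mul_one]
    rw [e, Real.log_div (hABpos ω).ne' (hBpos ω).ne', Real.log_div (hApos ω).ne' (hBpos ω).ne']
    ring
  rw [lintegral_congr step34]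
  -- step 5 : Tonelli back
  have hsw2 : AEMeasurable (Function.uncurry fun (ω:Ω) (y:ℝ) =>
      ENNReal.ofReal ((Real.exp (-(A ω * y)) - Real.exp (-((A ω + l * B ω) * y))) / y))
      (μM.prod (volume.restrict (Set.Ioi (0:ℝ)))) :=
    (ENNReal.measurable_ofReal.comp hGm).aemeasurable
  rw [lintegral_lintegral_swap hsw2]
  -- step 6 : apply the laws
  have step6 : ∀ y ∈ Set.Ioi (0:ℝ), (∫⁻ ω,
      ENNReal.ofReal ((Real.exp (-(A ω * y)) - Real.exp (-((A ω + l * B ω) * y))) / y) ∂μM)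
      = ENNReal.ofReal ((Real.exp (-(y^α)) - Real.exp (-((1+S) * y^α))) / y) := by
    intro y hy
    have hy0 : (0:ℝ) < y := hy
    have hint1 : Integrable (fun ω => Real.exp (-(A ω * y))) μM := by
      apply Integrable.mono' (integrable_const (1:ℝ))
      · exact ((hAm.mul_const y).neg.exp).aestronglyMeasurable
      · filter_upwards with ω
        rw [Real.norm_eq_abs, abs_of_pos (Real.exp_pos _)]
        exact Real.exp_le_one_iff.mpr (by nlinarith [hApos ω])
    have hint2 : Integrable (fun ω => Real.exp (-((A ω + l * B ω) * y))) μM := by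
      apply Integrable.mono' (integrable_const (1:ℝ))
      · exact (((hAm.add (hBm.const_mul l)).mul_const y).neg.exp).aestronglyMeasurable
      · filter_upwards with ω
        rw [Real.norm_eq_abs, abs_of_pos (Real.exp_pos _)]
        exact Real.exp_le_one_iff.mpr (by nlinarith [hABpos ω])
    have hint3 : Integrable (fun ω =>
        (Real.exp (-(A ω * y)) - Real.exp (-((A ω + l * B ω) * y))) / y) μM :=
      (hint1.sub hint2).div_const y
    rw [← ofReal_integral_eq_lintegral_ofReal hint3
      (ae_of_all _ fun ω => frullani_nonneg (hle ω) hy0)]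
    congr 1
    rw [integral_div, integral_sub hint1 hint2, hlawA y hy0, hlawAB y hy0]
  rw [setLIntegral_congr_fun measurableSet_Ioi step6]
  -- step 7 : substitution y = x^α and Frullani once more
  have heq : ∀ y ∈ Set.Ioi (0:ℝ),
      y ^ (α - 1) • ((Real.exp (-(1 * y^α)) - Real.exp (-((1+S) * y^α))) / y^α)
        = (Real.exp (-(y^α)) - Real.exp (-((1+S) * y^α))) / y := by
    intro y hy
    have hy0 : (0:ℝ) < y := hy
    have hya : (0:ℝ) < y ^ α := Real.rpow_pos_of_pos hy0 α
    rw [smul_eq_mul, one_mul, Real.rpow_sub hy0, Real.rpow_one]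
    field_simp
  have hInth : IntegrableOn (fun y => (Real.exp (-(y^α)) - Real.exp (-((1+S) * y^α))) / y)
      (Set.Ioi (0:ℝ)) := by
    have base := (integrableOn_Ioi_comp_rpow_iff'
      (fun z => (Real.exp (-(1 * z)) - Real.exp (-((1+S) * z))) / z) hα.ne').mpr
      (frullani_integrableOn one_pos hone)
    exact base.congr ((ae_restrict_iff' measurableSet_Ioi).mpr (ae_of_all _ fun y hy => heq y hy))
  have hval : ∫ y in Set.Ioi (0:ℝ), (Real.exp (-(y^α)) - Real.exp (-((1+S) * y^α))) / y
      = Real.log (1+S) / α := by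
    have hsub := MeasureTheory.integral_comp_rpow_Ioi_of_pos
      (g := fun z => (Real.exp (-(1 * z)) - Real.exp (-((1+S) * z))) / z) hα
    rw [frullani_exp one_pos hone, Real.log_one, sub_zero] at hsub
    simp_rw [mul_smul] at hsub
    rw [MeasureTheory.integral_smul] at hsub
    rw [MeasureTheory.setIntegral_congr_fun measurableSet_Ioi (fun y hy => heq y hy)] at hsub
    rw [smul_eq_mul] at hsub
    rw [eq_div_iff hα.ne', mul_comm]
    exact hsub
  rw [← ofReal_integral_eq_lintegral_ofReal hInth
    ((ae_restrict_iff' measurableSet_Ioi).mpr (ae_of_all _ fun y hy => by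
      have hy0 : (0:ℝ) < y := hy
      have : Real.exp (-((1+S) * y^α)) ≤ Real.exp (-(y^α)) :=
        Real.exp_le_exp.mpr (by nlinarith [Real.rpow_pos_of_pos hy0 α])
      exact div_nonneg (by linarith) hy0.le)),
    hval, ENNReal.toReal_ofReal (div_nonneg (Real.log_nonneg hone) hα.le)]

/-- Corollary 2 of the paper: the generalized positive Linnik process
`t ↦ Σ_i μ_i T^{(ν_i)}_α(γ_t)` is a driftless GGC subordinator with Lévy density
`α x⁻¹ E[exp(-x (ν·T)/(μ·T))]`.  By independence, its Laplace transform at `λ` is the gamma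
mixture on the left; the claim is that it equals the Lévy–Khintchine exponential on the
right, where `T^{(1)},…,T^{(N)}` are i.i.d. standard positive `α`-stable variables. -/
theorem stmt_18 {Ω : Type*} [MeasurableSpace Ω] (μM : Measure Ω) [IsProbabilityMeasure μM]
    (α t l : ℝ) (hα : 0 < α) (hα1 : α < 1) (ht : 0 < t) (hl : 0 ≤ l)
    (N : ℕ) (hN : 1 ≤ N) (ν : Fin N → ℝ) (hν : ∀ i, 0 < ν i)
    (hσ : ∑ i, (ν i) ^ α = 1)
    (μc : Fin N → ℝ) (hμc : ∀ i, 0 ≤ μc i) (hμcpos : ∃ i, 0 < μc i)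
    (T : Fin N → Ω → ℝ) (hTmeas : ∀ i, Measurable (T i)) (hTpos : ∀ i ω, 0 < T i ω)
    (hTlaw : ∀ lv : Fin N → ℝ, (∀ i, 0 ≤ lv i) →
      ∫ ω, Real.exp (-∑ i, lv i * T i ω) ∂μM = Real.exp (-∑ i, (lv i) ^ α)) :
    ∫ u in Set.Ioi (0:ℝ),
        (u ^ (t - 1) * Real.exp (-u) / Real.Gamma t) *
          Real.exp (-u * ∑ i, ((ν i + l * μc i) ^ α - (ν i) ^ α))
      = Real.exp (-(α * t) *
          ∫ x in Set.Ioi (0:ℝ),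
            (1 - Real.exp (-l * x)) * x⁻¹ *
              ∫ ω, Real.exp (-x * (∑ j, ν j * T j ω) / (∑ j, μc j * T j ω)) ∂μM) := by
  have hNe : Nonempty (Fin N) := ⟨⟨0, hN⟩⟩
  set S := ∑ i, ((ν i + l * μc i) ^ α - (ν i) ^ α) with hSdef
  have hS0 : 0 ≤ S := by
    apply Finset.sum_nonneg
    intro i _
    have : (ν i) ^ α ≤ (ν i + l * μc i) ^ α :=
      Real.rpow_le_rpow (hν i).le (by nlinarith [mul_nonneg hl (hμc i)]) hα.le
    linarith
  have h1S : (0:ℝ) < 1 + S := by linarith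
  have hsum : ∑ i, (ν i + l * μc i) ^ α = 1 + S := by
    rw [hSdef, Finset.sum_sub_distrib, hσ]; ring
  -- measurability and positivity of A, B
  have hAmeas : Measurable (fun ω => ∑ j, ν j * T j ω) :=
    Finset.measurable_sum _ fun i _ => (hTmeas i).const_mul _
  have hBmeas : Measurable (fun ω => ∑ j, μc j * T j ω) :=
    Finset.measurable_sum _ fun i _ => (hTmeas i).const_mul _
  have hApos : ∀ ω, 0 < ∑ j, ν j * T j ω := fun ω =>
    Finset.sum_pos (fun i _ => mul_pos (hν i) (hTpos i ω)) Finset.univ_nonempty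
  have hBpos : ∀ ω, 0 < ∑ j, μc j * T j ω := by
    intro ω
    obtain ⟨i, hi⟩ := hμcpos
    exact Finset.sum_pos' (fun j _ => mul_nonneg (hμc j) (hTpos j ω).le)
      ⟨i, Finset.mem_univ i, mul_pos hi (hTpos i ω)⟩
  -- the laws
  have hlawA : ∀ y : ℝ, 0 < y →
      ∫ ω, Real.exp (-((∑ j, ν j * T j ω) * y)) ∂μM = Real.exp (-(y^α)) := by
    intro y hy
    have e : ∀ ω, -((∑ j, ν j * T j ω) * y) = -∑ i, (y * ν i) * T i ω := by
      intro ω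
      rw [Finset.sum_mul]
      rw [show ∑ i, (y * ν i) * T i ω = ∑ i, ν i * T i ω * y from
        Finset.sum_congr rfl fun i _ => by ring]
    simp_rw [e]
    rw [hTlaw (fun i => y * ν i) (fun i => mul_nonneg hy.le (hν i).le)]
    congr 1
    rw [Finset.sum_congr rfl (fun i _ => Real.mul_rpow hy.le (hν i).le), ← Finset.mul_sum,
      hσ, mul_one]
  have hlawAB : ∀ y : ℝ, 0 < y →
      ∫ ω, Real.exp (-(((∑ j, ν j * T j ω) + l * ∑ j, μc j * T j ω) * y)) ∂μM
        = Real.exp (-((1+S) * y^α)) := by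
    intro y hy
    have e : ∀ ω, -(((∑ j, ν j * T j ω) + l * ∑ j, μc j * T j ω) * y)
        = -∑ i, (y * (ν i + l * μc i)) * T i ω := by
      intro ω
      rw [Finset.mul_sum, ← Finset.sum_add_distrib, Finset.sum_mul]
      rw [show ∑ i, (y * (ν i + l * μc i)) * T i ω
          = ∑ i, (ν i * T i ω + l * (μc i * T i ω)) * y from
        Finset.sum_congr rfl fun i _ => by ring]
    simp_rw [e]
    rw [hTlaw (fun i => y * (ν i + l * μc i))
      (fun i => mul_nonneg hy.le (by nlinarith [mul_nonneg hl (hμc i), hν i]))]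
    congr 1
    rw [Finset.sum_congr rfl (fun i _ => Real.mul_rpow hy.le
        (by nlinarith [mul_nonneg hl (hμc i), hν i])), ← Finset.mul_sum, hsum]
    ring
  have keyJ : (∫ x in Set.Ioi (0:ℝ), (1 - Real.exp (-l * x)) * x⁻¹ *
        ∫ ω, Real.exp (-x * (∑ j, ν j * T j ω) / (∑ j, μc j * T j ω)) ∂μM)
      = Real.log (1+S) / α :=
    linnik_key μM α l S hα hl hS0 (fun ω => ∑ j, ν j * T j ω) (fun ω => ∑ j, μc j * T j ω)
      hAmeas hBmeas hApos hBpos hlawA hlawAB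
  -- the gamma integral
  have hGam : Real.Gamma t ≠ 0 := (Real.Gamma_pos_of_pos ht).ne'
  have hL : (∫ u in Set.Ioi (0:ℝ), (u ^ (t - 1) * Real.exp (-u) / Real.Gamma t) *
        Real.exp (-u * S)) = (1/(1+S)) ^ t := by
    have heq : Set.EqOn (fun u : ℝ => (u ^ (t - 1) * Real.exp (-u) / Real.Gamma t) *
          Real.exp (-u * S))
        (fun u : ℝ => (u ^ (t - 1) * Real.exp (-((1+S) * u))) / Real.Gamma t) (Set.Ioi 0) := by
      intro u hu
      simp only []
      rw [show -((1+S) * u) = -u + -u * S by ring, Real.exp_add]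
      ring
    rw [MeasureTheory.setIntegral_congr_fun measurableSet_Ioi heq, integral_div,
      Real.integral_rpow_mul_exp_neg_mul_Ioi ht h1S, mul_div_assoc, div_self hGam, mul_one]
  rw [hL, keyJ]
  rw [Real.rpow_def_of_pos (by positivity : (0:ℝ) < 1/(1+S)), one_div, Real.log_inv]
  congr 1
  field_simp
end
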